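/- arXiv:math/0407298 — 7 statements merged into one kernel-verified Lean document; each statement's English description precedes it below -/
import Mathlib

section
/- Let a1,...,a6 be nonnegative integers, not all zero, and for i = 1,2,3 set ai' = max(0, ai - 1). Then the three inequalities a1+a2 >= a4, a1+a3 >= a5 and a2+a3 >= a6 hold simultaneously if and only if the ideal I(a1,a2,a3,a4,a5,a6) equals a * I(a1',a2',a3',a4,a5,a6) + (b^{a1} c^{a2} d^{a3}), i.e. the sum of the product of the variable a with the tetrahedral ideal I(a1',a2',a3',a4,a5,a6) and the principal ideal generated by the monomial b^{a1} c^{a2} d^{a3}. -/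
open MvPolynomial

/-- The tetrahedral ideal `(a,b)^{a1} ∩ (a,c)^{a2} ∩ (a,d)^{a3} ∩ (b,c)^{a4} ∩ (b,d)^{a5} ∩ (c,d)^{a6}`
in `R = k[a,b,c,d]`, realized as `MvPolynomial (Fin 4) k` with `a = X 0`, `b = X 1`, `c = X 2`,
`d = X 3`.  The 0-th power of an ideal is the unit ideal. -/
noncomputable def tet (k : Type) [Field k] (a1 a2 a3 a4 a5 a6 : ℕ) :
    Ideal (MvPolynomial (Fin 4) k) :=
  Ideal.span {X 0, X 1} ^ a1 ⊓ Ideal.span {X 0, X 2} ^ a2 ⊓ Ideal.span {X 0, X 3} ^ a3 ⊓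
    Ideal.span {X 1, X 2} ^ a4 ⊓ Ideal.span {X 1, X 3} ^ a5 ⊓ Ideal.span {X 2, X 3} ^ a6

namespace TetAux

variable {k : Type} [Field k]

/-- The ideal of polynomials all of whose monomials have degree in `{i,j}` at least `n`. -/
def degLB (k : Type) [Field k] (i j : Fin 4) (n : ℕ) : Ideal (MvPolynomial (Fin 4) k) where
  carrier := {f | ∀ m ∈ f.support, n ≤ m i + m j}
  add_mem' := by
    intro f g hf hg m hm
    rcases Finset.mem_union.mp (MvPolynomial.support_add hm) with h | h
    · exact hf m h
    · exact hg m h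
  zero_mem' := by simp
  smul_mem' := by
    intro c f hf m hm
    rw [smul_eq_mul] at hm
    obtain ⟨m1, hm1, m2, hm2, rfl⟩ := Finset.mem_add.mp (MvPolynomial.support_mul _ _ hm)
    have := hf m2 hm2
    simp only [Finsupp.add_apply]
    omega

lemma mul_mem_degLB {i j : Fin 4} {a b : ℕ} {f g : MvPolynomial (Fin 4) k}
    (hf : f ∈ degLB k i j a) (hg : g ∈ degLB k i j b) : f * g ∈ degLB k i j (a + b) := by
  intro m hm
  obtain ⟨m1, hm1, m2, hm2, rfl⟩ := Finset.mem_add.mp (MvPolynomial.support_mul _ _ hm)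
  have h1 := hf m1 hm1
  have h2 := hg m2 hm2
  simp only [Finsupp.add_apply]
  omega

lemma span_pow_le (i j : Fin 4) (n : ℕ) :
    Ideal.span {X i, X j} ^ n ≤ degLB k i j n := by
  induction n with
  | zero => intro f _ m _; exact Nat.zero_le _
  | succ n ih =>
    rw [pow_succ]
    refine Ideal.mul_le.mpr fun r hr s hs => ?_
    have hr' : r ∈ degLB k i j n := ih hr
    have hs' : s ∈ degLB k i j 1 := by
      refine Ideal.span_le.mpr ?_ hs
      rintro x (rfl | rfl) <;>
      · intro m hm
        rw [MvPolynomial.support_X] at hm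
        simp only [Finset.mem_singleton] at hm
        subst hm
        simp [Finsupp.single_apply]
    exact mul_mem_degLB hr' hs'

/-- Factor a monomial according to a decomposition of its exponent. -/
lemma monomial_factor {m m1 m2 : Fin 4 →₀ ℕ} (h : m1 + m2 = m) (c : k) :
    (monomial m c : MvPolynomial (Fin 4) k) = monomial m1 1 * monomial m2 c := by
  rw [monomial_mul, one_mul, h]

lemma monomial_mem_span_pow {i j : Fin 4} (hij : i ≠ j) {n : ℕ} (m : Fin 4 →₀ ℕ) (c : k)
    (h : n ≤ m i + m j) : monomial m c ∈ Ideal.span {X i, X j} ^ n := by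
  have hd : Finsupp.single i (m i) + Finsupp.single j (m j)
      + (m - (Finsupp.single i (m i) + Finsupp.single j (m j))) = m := by
    ext x
    rcases eq_or_ne i x with rfl | hix
    · rcases eq_or_ne j i with rfl | hji
      · exact absurd rfl hij
      · simp [Finsupp.add_apply, Finsupp.tsub_apply, Finsupp.single_apply, hji] <;> omega
    · rcases eq_or_ne j x with rfl | hjx
      · simp [Finsupp.add_apply, Finsupp.tsub_apply, Finsupp.single_apply, hix] <;> omega
      · simp [Finsupp.add_apply, Finsupp.tsub_apply, Finsupp.single_apply, hix, hjx] <;> omega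
  have key : (monomial m c : MvPolynomial (Fin 4) k) =
      monomial (Finsupp.single i (m i) + Finsupp.single j (m j)) 1 *
        monomial (m - (Finsupp.single i (m i) + Finsupp.single j (m j))) c :=
    monomial_factor hd c
  rw [key, mul_comm]
  have hx : (monomial (Finsupp.single i (m i) + Finsupp.single j (m j)) 1
      : MvPolynomial (Fin 4) k) ∈ Ideal.span {X i, X j} ^ (m i + m j) := by
    have : (monomial (Finsupp.single i (m i) + Finsupp.single j (m j)) 1
        : MvPolynomial (Fin 4) k) = X i ^ (m i) * X j ^ (m j) := by
      rw [X_pow_eq_monomial, X_pow_eq_monomial, monomial_mul, mul_one]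
    rw [this, pow_add]
    exact Ideal.mul_mem_mul
      (Ideal.pow_mem_pow (Ideal.subset_span (by simp)) _)
      (Ideal.pow_mem_pow (Ideal.subset_span (by simp)) _)
  exact Ideal.mul_mem_left _ _ (Ideal.pow_le_pow_right h hx)

lemma mem_span_pow_iff {i j : Fin 4} (hij : i ≠ j) {n : ℕ} {f : MvPolynomial (Fin 4) k} :
    f ∈ Ideal.span {X i, X j} ^ n ↔ ∀ m ∈ f.support, n ≤ m i + m j := by
  constructor
  · exact fun hf => span_pow_le i j n hf
  · intro hf
    rw [← f.support_sum_monomial_coeff]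
    exact Ideal.sum_mem _ fun m hm => monomial_mem_span_pow hij m _ (hf m hm)

lemma mem_tet_iff {a1 a2 a3 a4 a5 a6 : ℕ} {f : MvPolynomial (Fin 4) k} :
    f ∈ tet k a1 a2 a3 a4 a5 a6 ↔ ∀ m ∈ f.support,
      a1 ≤ m 0 + m 1 ∧ a2 ≤ m 0 + m 2 ∧ a3 ≤ m 0 + m 3 ∧
      a4 ≤ m 1 + m 2 ∧ a5 ≤ m 1 + m 3 ∧ a6 ≤ m 2 + m 3 := by
  simp only [tet, Submodule.mem_inf, mem_span_pow_iff (show (0:Fin 4) ≠ 1 by decide),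
    mem_span_pow_iff (show (0:Fin 4) ≠ 2 by decide),
    mem_span_pow_iff (show (0:Fin 4) ≠ 3 by decide),
    mem_span_pow_iff (show (1:Fin 4) ≠ 2 by decide),
    mem_span_pow_iff (show (1:Fin 4) ≠ 3 by decide),
    mem_span_pow_iff (show (2:Fin 4) ≠ 3 by decide)]
  constructor
  · rintro ⟨⟨⟨⟨⟨h1, h2⟩, h3⟩, h4⟩, h5⟩, h6⟩ m hm
    exact ⟨h1 m hm, h2 m hm, h3 m hm, h4 m hm, h5 m hm, h6 m hm⟩
  · intro hf
    exact ⟨⟨⟨⟨⟨fun m hm => (hf m hm).1, fun m hm => (hf m hm).2.1⟩,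
      fun m hm => (hf m hm).2.2.1⟩, fun m hm => (hf m hm).2.2.2.1⟩,
      fun m hm => (hf m hm).2.2.2.2.1⟩, fun m hm => (hf m hm).2.2.2.2.2⟩

lemma X0_support {r : MvPolynomial (Fin 4) k} (hr : r ∈ Ideal.span {X 0}) :
    ∀ m ∈ r.support, 1 ≤ m 0 := by
  have hr' : r ∈ degLB k 0 0 1 := by
    refine span_pow_le 0 0 1 ?_
    simpa [Set.pair_eq_singleton] using hr
  intro m hm
  have := hr' m hm
  omega

lemma mono_eq (a1 a2 a3 : ℕ) : (X 1 ^ a1 * X 2 ^ a2 * X 3 ^ a3 : MvPolynomial (Fin 4) k) =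
    monomial (Finsupp.single 1 a1 + Finsupp.single 2 a2 + Finsupp.single 3 a3) 1 := by
  rw [X_pow_eq_monomial, X_pow_eq_monomial, X_pow_eq_monomial, monomial_mul, monomial_mul]
  simp

lemma X0_eq : (X 0 : MvPolynomial (Fin 4) k) = monomial (Finsupp.single 0 1) 1 := by
  rw [← pow_one (X 0 : MvPolynomial (Fin 4) k), X_pow_eq_monomial]

end TetAux

open TetAux in
/-- Reduction (A): the inequalities `a1+a2 ≥ a4`, `a1+a3 ≥ a5`, `a2+a3 ≥ a6` hold
simultaneously iff `I(a1,…,a6) = a·I(a1',a2',a3',a4,a5,a6) + (b^{a1} c^{a2} d^{a3})`,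
where `ai' = max (0, ai - 1)` (truncated subtraction in ℕ). -/
theorem stmt_0 (k : Type) [Field k] (a1 a2 a3 a4 a5 a6 : ℕ)
    (h : ¬ (a1 = 0 ∧ a2 = 0 ∧ a3 = 0 ∧ a4 = 0 ∧ a5 = 0 ∧ a6 = 0)) :
    (a4 ≤ a1 + a2 ∧ a5 ≤ a1 + a3 ∧ a6 ≤ a2 + a3) ↔
      tet k a1 a2 a3 a4 a5 a6 =
        Ideal.span {X 0} * tet k (a1 - 1) (a2 - 1) (a3 - 1) a4 a5 a6 +
          Ideal.span {X 1 ^ a1 * X 2 ^ a2 * X 3 ^ a3} := by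
  classical
  constructor
  · rintro ⟨h4, h5, h6⟩
    apply le_antisymm
    · -- tet ⊆ RHS
      intro f hf
      rw [← f.support_sum_monomial_coeff]
      refine Ideal.sum_mem _ fun m hm => ?_
      obtain ⟨c1, c2, c3, c4, c5, c6⟩ := mem_tet_iff.mp hf m hm
      by_cases h0 : m 0 = 0
      · -- the monomial is divisible by b^a1 c^a2 d^a3
        apply Ideal.mem_sup_right
        rw [Ideal.mem_span_singleton, mono_eq]
        refine ⟨monomial (m - (Finsupp.single 1 a1 + Finsupp.single 2 a2 + Finsupp.single 3 a3))
          (coeff m f), ?_⟩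
        exact monomial_factor (by ext x; fin_cases x <;> simp [Finsupp.single_apply] <;> omega)
          (coeff m f)
      · -- the monomial is divisible by a = X 0
        apply Ideal.mem_sup_left
        rw [monomial_factor (m1 := Finsupp.single 0 1) (m2 := m - Finsupp.single 0 1)
          (by ext x; fin_cases x <;> simp [Finsupp.single_apply] <;> omega) (coeff m f),
          ← X0_eq]
        refine Ideal.mul_mem_mul (Ideal.subset_span rfl) ?_
        rw [mem_tet_iff]
        intro m' hm'
        rw [support_monomial, if_neg (mem_support_iff.mp hm), Finset.mem_singleton] at hm'
        subst hm'
        refine ⟨?_, ?_, ?_, ?_, ?_, ?_⟩ <;>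
          simp [Finsupp.tsub_apply, Finsupp.single_apply] <;> omega
    · -- RHS ⊆ tet
      apply sup_le
      · refine Ideal.mul_le.mpr fun r hr s hs => ?_
        rw [mem_tet_iff]
        intro m hm
        obtain ⟨m1, hm1, m2, hm2, rfl⟩ := Finset.mem_add.mp (MvPolynomial.support_mul _ _ hm)
        have h0 := X0_support hr m1 hm1
        obtain ⟨c1, c2, c3, c4, c5, c6⟩ := mem_tet_iff.mp hs m2 hm2
        simp only [Finsupp.add_apply]
        exact ⟨by omega, by omega, by omega, by omega, by omega, by omega⟩
      · have hmono : (X 1 ^ a1 * X 2 ^ a2 * X 3 ^ a3 : MvPolynomial (Fin 4) k) ∈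
            tet k a1 a2 a3 a4 a5 a6 := by
          rw [mono_eq, mem_tet_iff]
          intro m hm
          rw [support_monomial, if_neg one_ne_zero, Finset.mem_singleton] at hm
          subst hm
          refine ⟨?_, ?_, ?_, ?_, ?_, ?_⟩ <;>
            simp [Finsupp.add_apply, Finsupp.single_apply] <;> omega
        exact Ideal.span_le.mpr (Set.singleton_subset_iff.mpr hmono)
  · intro heq
    have hmem : (X 1 ^ a1 * X 2 ^ a2 * X 3 ^ a3 : MvPolynomial (Fin 4) k) ∈
        tet k a1 a2 a3 a4 a5 a6 := by
      rw [heq]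
      exact Ideal.mem_sup_right (Ideal.subset_span rfl)
    rw [mono_eq, mem_tet_iff] at hmem
    obtain ⟨c1, c2, c3, c4, c5, c6⟩ := hmem
      (Finsupp.single 1 a1 + Finsupp.single 2 a2 + Finsupp.single 3 a3)
      (by rw [support_monomial, if_neg one_ne_zero]; exact Finset.mem_singleton_self _)
    simp [Finsupp.add_apply, Finsupp.single_apply] at c4 c5 c6
    exact ⟨by omega, by omega, by omega⟩
end

section
/- Let a1,...,a6 be nonnegative integers, not all zero, and for i = 1,4,5 set ai' = max(0, ai - 1). Then the three inequalities a1+a4 >= a2, a1+a5 >= a3 and a4+a5 >= a6 hold simultaneously if and only if the ideal I(a1,a2,a3,a4,a5,a6) equals b * I(a1',a2,a3,a4',a5',a6) + (a^{a1} c^{a4} d^{a5}), i.e. the sum of the product of the variable b with the tetrahedral ideal I(a1',a2,a3,a4',a5',a6) and the principal ideal generated by the monomial a^{a1} c^{a4} d^{a5}. -/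
open MvPolynomial

variable {k : Type} [Field k]

def wIdeal (k : Type) [Field k] (i j : Fin 4) (n : ℕ) : Ideal (MvPolynomial (Fin 4) k) where
  carrier := {p | ∀ m ∈ p.support, n ≤ m i + m j}
  add_mem' := by
    intro p q hp hq m hm
    rcases Finset.mem_union.1 (MvPolynomial.support_add hm) with h | h
    exacts [hp m h, hq m h]
  zero_mem' := by simp
  smul_mem' := by
    intro c p hp m hm
    rw [smul_eq_mul] at hm
    obtain ⟨m1, hm1, m2, hm2, rfl⟩ := Finset.mem_add.1 (MvPolynomial.support_mul c p hm)
    have := hp m2 hm2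
    simp only [Finsupp.add_apply]
    omega

lemma mem_wIdeal {i j : Fin 4} {n : ℕ} {p : MvPolynomial (Fin 4) k} :
    p ∈ wIdeal k i j n ↔ ∀ m ∈ p.support, n ≤ m i + m j := Iff.rfl

lemma XX_mem_pow (i j : Fin 4) (s t n : ℕ) (h : n ≤ s + t) :
    (X i : MvPolynomial (Fin 4) k) ^ s * X j ^ t ∈ Ideal.span {X i, X j} ^ n := by
  apply Ideal.pow_le_pow_right h
  rw [pow_add]
  exact Ideal.mul_mem_mul
    (Ideal.pow_mem_pow (Ideal.subset_span (by simp)) s)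
    (Ideal.pow_mem_pow (Ideal.subset_span (by simp)) t)

lemma span_le_wIdeal (i j : Fin 4) :
    (Ideal.span {X i, X j} : Ideal (MvPolynomial (Fin 4) k)) ≤ wIdeal k i j 1 := by
  rw [Ideal.span_le]
  rintro x (rfl | rfl) <;>
  · intro m hm
    rw [support_X] at hm
    simp only [Finset.mem_singleton] at hm
    subst hm
    simp only [Finsupp.single_apply]
    split_ifs <;> omega

lemma pow_eq_wIdeal (i j : Fin 4) (hij : i ≠ j) (n : ℕ) :
    (Ideal.span {X i, X j} : Ideal (MvPolynomial (Fin 4) k)) ^ n = wIdeal k i j n := by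
  apply le_antisymm
  · induction n with
    | zero => intro p _ m _; simp
    | succ n ih =>
      rw [pow_succ]
      refine Ideal.mul_le.2 fun r hr s hs m hm => ?_
      obtain ⟨m1, hm1, m2, hm2, rfl⟩ := Finset.mem_add.1 (MvPolynomial.support_mul r s hm)
      have h1 := ih hr m1 hm1
      have h2 := span_le_wIdeal i j hs m2 hm2
      simp only [Finsupp.add_apply]
      omega
  · intro p hp
    rw [← p.support_sum_monomial_coeff]
    refine Ideal.sum_mem _ fun m hm => ?_
    have hw := hp m hm
    have hexp : (m.erase i).erase j + (Finsupp.single i (m i) + Finsupp.single j (m j)) = m := by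
      ext x
      by_cases hxi : x = i
      · subst hxi
        simp [Finsupp.erase_apply, Finsupp.single_apply, hij, Ne.symm hij]
      · by_cases hxj : x = j
        · subst hxj
          simp [Finsupp.erase_apply, Finsupp.single_apply, hxi, Ne.symm hxi]
        · simp [Finsupp.erase_apply, Finsupp.single_apply, hxi, hxj, Ne.symm hxi, Ne.symm hxj]
    have key : (monomial m (coeff m p) : MvPolynomial (Fin 4) k)
        = monomial ((m.erase i).erase j) (coeff m p) * (X i ^ (m i) * X j ^ (m j)) := by
      rw [X_pow_eq_monomial, X_pow_eq_monomial, monomial_mul, monomial_mul, mul_one, mul_one, hexp]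
    rw [key]
    exact Ideal.mul_mem_left _ _ (XX_mem_pow i j _ _ n hw)


lemma mem_tet_iff {a1 a2 a3 a4 a5 a6 : ℕ} {p : MvPolynomial (Fin 4) k} :
    p ∈ tet k a1 a2 a3 a4 a5 a6 ↔ ∀ m ∈ p.support,
      a1 ≤ m 0 + m 1 ∧ a2 ≤ m 0 + m 2 ∧ a3 ≤ m 0 + m 3 ∧
      a4 ≤ m 1 + m 2 ∧ a5 ≤ m 1 + m 3 ∧ a6 ≤ m 2 + m 3 := by
  rw [tet, pow_eq_wIdeal 0 1 (by decide), pow_eq_wIdeal 0 2 (by decide),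
    pow_eq_wIdeal 0 3 (by decide), pow_eq_wIdeal 1 2 (by decide),
    pow_eq_wIdeal 1 3 (by decide), pow_eq_wIdeal 2 3 (by decide)]
  simp only [Submodule.mem_inf, mem_wIdeal]
  constructor
  · rintro ⟨⟨⟨⟨⟨h1, h2⟩, h3⟩, h4⟩, h5⟩, h6⟩ m hm
    exact ⟨h1 m hm, h2 m hm, h3 m hm, h4 m hm, h5 m hm, h6 m hm⟩
  · intro h
    exact ⟨⟨⟨⟨⟨fun m hm => (h m hm).1, fun m hm => (h m hm).2.1⟩, fun m hm => (h m hm).2.2.1⟩,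
      fun m hm => (h m hm).2.2.2.1⟩, fun m hm => (h m hm).2.2.2.2.1⟩,
      fun m hm => (h m hm).2.2.2.2.2⟩

lemma g_eq (a1 a4 a5 : ℕ) :
    (X 0 ^ a1 * X 2 ^ a4 * X 3 ^ a5 : MvPolynomial (Fin 4) k) =
      monomial (Finsupp.single 0 a1 + Finsupp.single 2 a4 + Finsupp.single 3 a5) 1 := by
  simp only [X_pow_eq_monomial, monomial_mul, mul_one, one_mul]


/-- Reduction (B): the inequalities `a1+a4 ≥ a2`, `a1+a5 ≥ a3`, `a4+a5 ≥ a6` hold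
simultaneously iff `I(a1,…,a6) = b·I(a1',a2,a3,a4',a5',a6) + (a^{a1} c^{a4} d^{a5})`,
where `ai' = max (0, ai - 1)` (truncated subtraction in ℕ). -/
theorem stmt_1 (k : Type) [Field k] (a1 a2 a3 a4 a5 a6 : ℕ)
    (h : ¬ (a1 = 0 ∧ a2 = 0 ∧ a3 = 0 ∧ a4 = 0 ∧ a5 = 0 ∧ a6 = 0)) :
    (a2 ≤ a1 + a4 ∧ a3 ≤ a1 + a5 ∧ a6 ≤ a4 + a5) ↔
      tet k a1 a2 a3 a4 a5 a6 =
        Ideal.span {X 1} * tet k (a1 - 1) a2 a3 (a4 - 1) (a5 - 1) a6 +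
          Ideal.span {X 0 ^ a1 * X 2 ^ a4 * X 3 ^ a5} := by
  classical
  set s : Fin 4 →₀ ℕ := Finsupp.single 0 a1 + Finsupp.single 2 a4 + Finsupp.single 3 a5 with hs
  have hs0 : s 0 = a1 := by simp [hs, Finsupp.single_apply]
  have hs1 : s 1 = 0 := by simp [hs, Finsupp.single_apply]
  have hs2 : s 2 = a4 := by simp [hs, Finsupp.single_apply]
  have hs3 : s 3 = a5 := by simp [hs, Finsupp.single_apply]
  constructor
  · rintro ⟨h12, h13, h23⟩
    apply le_antisymm
    · -- tet ≤ RHS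
      intro p hp
      rw [mem_tet_iff] at hp
      rw [← p.support_sum_monomial_coeff]
      refine Ideal.sum_mem _ fun m hm => ?_
      obtain ⟨c1, c2, c3, c4, c5, c6⟩ := hp m hm
      by_cases hm1 : m 1 = 0
      · apply Ideal.mem_sup_right
        rw [Ideal.mem_span_singleton]
        refine ⟨monomial (m - s) (coeff m p), ?_⟩
        have hfin : ∀ y : Fin 4, y = 0 ∨ y = 1 ∨ y = 2 ∨ y = 3 := by decide
        have hexp : s + (m - s) = m := by
          ext x
          rcases hfin x with rfl | rfl | rfl | rfl <;>
            rw [Finsupp.add_apply, Finsupp.tsub_apply]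
          · rw [hs0]; omega
          · rw [hs1]; omega
          · rw [hs2]; omega
          · rw [hs3]; omega
        rw [g_eq, ← hs, monomial_mul, one_mul, hexp]
      · apply Ideal.mem_sup_left
        have hfin : ∀ y : Fin 4, y = 0 ∨ y = 1 ∨ y = 2 ∨ y = 3 := by decide
        have f0 : (Finsupp.single (1 : Fin 4) 1) 0 = 0 := Finsupp.single_eq_of_ne (by decide)
        have f1 : (Finsupp.single (1 : Fin 4) 1) 1 = 1 := Finsupp.single_eq_same
        have f2 : (Finsupp.single (1 : Fin 4) 1) 2 = 0 := Finsupp.single_eq_of_ne (by decide)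
        have f3 : (Finsupp.single (1 : Fin 4) 1) 3 = 0 := Finsupp.single_eq_of_ne (by decide)
        have hexp2 : Finsupp.single (1 : Fin 4) 1 + (m - Finsupp.single 1 1) = m := by
          ext x
          rcases hfin x with rfl | rfl | rfl | rfl <;>
            rw [Finsupp.add_apply, Finsupp.tsub_apply]
          · rw [f0]; omega
          · rw [f1]; omega
          · rw [f2]; omega
          · rw [f3]; omega
        have key : (monomial m (coeff m p) : MvPolynomial (Fin 4) k)
            = X 1 * monomial (m - Finsupp.single 1 1) (coeff m p) := by
          rw [← pow_one (X 1 : MvPolynomial (Fin 4) k), ← monomial_single_add, hexp2]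
        rw [key]
        refine Ideal.mul_mem_mul (Ideal.mem_span_singleton_self _) ?_
        rw [mem_tet_iff]
        intro m' hm'
        have := MvPolynomial.support_monomial_subset hm'
        rw [Finset.mem_singleton] at this
        subst this
        have e0 : (m - Finsupp.single 1 1 : Fin 4 →₀ ℕ) 0 = m 0 := by
          rw [Finsupp.tsub_apply, Finsupp.single_eq_of_ne (by decide)]; omega
        have e1 : (m - Finsupp.single 1 1 : Fin 4 →₀ ℕ) 1 = m 1 - 1 := by
          rw [Finsupp.tsub_apply, Finsupp.single_eq_same]
        have e2 : (m - Finsupp.single 1 1 : Fin 4 →₀ ℕ) 2 = m 2 := by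
          rw [Finsupp.tsub_apply, Finsupp.single_eq_of_ne (by decide)]; omega
        have e3 : (m - Finsupp.single 1 1 : Fin 4 →₀ ℕ) 3 = m 3 := by
          rw [Finsupp.tsub_apply, Finsupp.single_eq_of_ne (by decide)]; omega
        rw [e0, e1, e2, e3]
        omega
    · -- RHS ≤ tet
      apply sup_le
      · intro x hx
        obtain ⟨q, hq, rfl⟩ := Ideal.mem_span_singleton_mul.1 hx
        rw [mem_tet_iff] at hq ⊢
        intro m hm
        obtain ⟨m1, hm1, m2, hm2, rfl⟩ := Finset.mem_add.1 (MvPolynomial.support_mul _ _ hm)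
        rw [support_X, Finset.mem_singleton] at hm1
        subst hm1
        have hq2 := hq m2 hm2
        have f0 : (Finsupp.single (1 : Fin 4) 1) 0 = 0 := Finsupp.single_eq_of_ne (by decide)
        have f1 : (Finsupp.single (1 : Fin 4) 1) 1 = 1 := Finsupp.single_eq_same
        have f2 : (Finsupp.single (1 : Fin 4) 1) 2 = 0 := Finsupp.single_eq_of_ne (by decide)
        have f3 : (Finsupp.single (1 : Fin 4) 1) 3 = 0 := Finsupp.single_eq_of_ne (by decide)
        simp only [Finsupp.add_apply, f0, f1, f2, f3]
        omega
      · rw [Ideal.span_le, Set.singleton_subset_iff]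
        rw [SetLike.mem_coe, g_eq, ← hs, mem_tet_iff]
        intro m hm
        have := MvPolynomial.support_monomial_subset hm
        rw [Finset.mem_singleton] at this
        subst this
        rw [hs0, hs1, hs2, hs3]
        omega
  · intro heq
    have hg : (X 0 ^ a1 * X 2 ^ a4 * X 3 ^ a5 : MvPolynomial (Fin 4) k)
        ∈ tet k a1 a2 a3 a4 a5 a6 := by
      rw [heq]
      exact Ideal.mem_sup_right (Ideal.subset_span rfl)
    rw [mem_tet_iff] at hg
    have hmem : s ∈ (X 0 ^ a1 * X 2 ^ a4 * X 3 ^ a5 : MvPolynomial (Fin 4) k).support := by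
      rw [g_eq, ← hs, support_monomial, if_neg one_ne_zero]
      exact Finset.mem_singleton_self _
    have := hg s hmem
    rw [hs0, hs1, hs2, hs3] at this
    omega
end

section
/- Let (a1,...,a6) be a 6-tuple of nonnegative integers, not all zero, such that a6 >= ai for all i. Then (a1,...,a6) is S-minimal if and only if a1 > max(a3+a5, a2+a4) and a6 > max(a4+a5, a2+a3). -/
/-- System (A) of inequalities: `a1+a2 ≥ a4`, `a1+a3 ≥ a5`, `a2+a3 ≥ a6`. -/
def sysA (a1 a2 a3 a4 a5 a6 : ℕ) : Prop := a4 ≤ a1 + a2 ∧ a5 ≤ a1 + a3 ∧ a6 ≤ a2 + a3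

/-- System (B) of inequalities: `a1+a4 ≥ a2`, `a1+a5 ≥ a3`, `a4+a5 ≥ a6`. -/
def sysB (a1 a2 a3 a4 a5 a6 : ℕ) : Prop := a2 ≤ a1 + a4 ∧ a3 ≤ a1 + a5 ∧ a6 ≤ a4 + a5

/-- System (C) of inequalities: `a2+a4 ≥ a1`, `a2+a6 ≥ a3`, `a4+a6 ≥ a5`. -/
def sysC (a1 a2 a3 a4 a5 a6 : ℕ) : Prop := a1 ≤ a2 + a4 ∧ a3 ≤ a2 + a6 ∧ a5 ≤ a4 + a6

/-- System (D) of inequalities: `a3+a5 ≥ a1`, `a3+a6 ≥ a2`, `a5+a6 ≥ a4`. -/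
def sysD (a1 a2 a3 a4 a5 a6 : ℕ) : Prop := a1 ≤ a3 + a5 ∧ a2 ≤ a3 + a6 ∧ a4 ≤ a5 + a6

/-- A 6-tuple of nonnegative integers, not all zero, is `S`-minimal if none of the four
systems (A), (B), (C), (D) is satisfied. -/
def SMinimal (a1 a2 a3 a4 a5 a6 : ℕ) : Prop :=
  ¬ (a1 = 0 ∧ a2 = 0 ∧ a3 = 0 ∧ a4 = 0 ∧ a5 = 0 ∧ a6 = 0) ∧
    ¬ sysA a1 a2 a3 a4 a5 a6 ∧ ¬ sysB a1 a2 a3 a4 a5 a6 ∧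
    ¬ sysC a1 a2 a3 a4 a5 a6 ∧ ¬ sysD a1 a2 a3 a4 a5 a6

/-- Numerical criterion for S-minimality when `a6` is the maximal weight. -/
theorem stmt_3 (a1 a2 a3 a4 a5 a6 : ℕ)
    (hne : ¬ (a1 = 0 ∧ a2 = 0 ∧ a3 = 0 ∧ a4 = 0 ∧ a5 = 0 ∧ a6 = 0))
    (hmax : a1 ≤ a6 ∧ a2 ≤ a6 ∧ a3 ≤ a6 ∧ a4 ≤ a6 ∧ a5 ≤ a6) :
    SMinimal a1 a2 a3 a4 a5 a6 ↔
      (max (a3 + a5) (a2 + a4) < a1 ∧ max (a4 + a5) (a2 + a3) < a6) := by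
  simp only [SMinimal, sysA, sysB, sysC, sysD, not_and_or, not_le, max_lt_iff]
  omega
end

section
/- Let (a1,...,a6) be a 6-tuple of nonnegative integers with a6 = max{a1,...,a6} > 0. Set wA = a1+a2+a3, wB = a1+a4+a5, wC = a2+a4+a6, wD = a3+a5+a6 (the weights of the four facets of the tetrahedron) and let w = max{wA, wB, wC, wD}. Then the following are equivalent: (a) (a1,...,a6) is not S-minimal, i.e. at least one of the systems (A), (B), (C), (D) is satisfied; (b) a1 + a6 <= w; (c) for every X in {A,B,C,D} with wX = w, the system (X) is satisfied. -/
/-- A tetrahedral curve is not S-minimal iff `a1 + a6 ≤ w`, iff every facet of maximal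
weight `w` can be reduced (i.e. the corresponding system is satisfied). -/
theorem stmt_4 (a1 a2 a3 a4 a5 a6 : ℕ)
    (hmax : a1 ≤ a6 ∧ a2 ≤ a6 ∧ a3 ≤ a6 ∧ a4 ≤ a6 ∧ a5 ≤ a6) (hpos : 0 < a6) :
    letI wA := a1 + a2 + a3
    letI wB := a1 + a4 + a5
    letI wC := a2 + a4 + a6
    letI wD := a3 + a5 + a6
    letI w := max (max wA wB) (max wC wD)
    [¬ SMinimal a1 a2 a3 a4 a5 a6,
      a1 + a6 ≤ w,
      (wA = w → sysA a1 a2 a3 a4 a5 a6) ∧ (wB = w → sysB a1 a2 a3 a4 a5 a6) ∧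
        (wC = w → sysC a1 a2 a3 a4 a5 a6) ∧ (wD = w → sysD a1 a2 a3 a4 a5 a6)].TFAE := by
  obtain ⟨h1, h2, h3, h4, h5⟩ := hmax
  simp only [SMinimal, sysA, sysB, sysC, sysD]
  tfae_have 1 → 2 := by omega
  tfae_have 2 → 3 := by omega
  tfae_have 3 → 1 := by omega
  tfae_finish
end

section
/- Define a reduction step on 6-tuples of nonnegative integers, writing x' = max(0, x-1): if system (A) is satisfied, (a1,...,a6) may be replaced by (a1',a2',a3',a4,a5,a6); if (B) is satisfied, by (a1',a2,a3,a4',a5',a6); if (C) is satisfied, by (a1,a2',a3,a4',a5,a6'); if (D) is satisfied, by (a1,a2,a3',a4,a5',a6'). Then for every 6-tuple t of nonnegative integers there exists a finite sequence of reduction steps starting at t and ending at a tuple that is either the zero tuple or S-minimal. -/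
/-- One reduction step on 6-tuples: if system (A) (resp. (B), (C), (D)) is satisfied, the
weights of the corresponding facet are decreased by one (truncated at 0). -/
def Step (t t' : ℕ × ℕ × ℕ × ℕ × ℕ × ℕ) : Prop :=
  match t with
  | (a1, a2, a3, a4, a5, a6) =>
      (sysA a1 a2 a3 a4 a5 a6 ∧ t' = (a1 - 1, a2 - 1, a3 - 1, a4, a5, a6)) ∨
      (sysB a1 a2 a3 a4 a5 a6 ∧ t' = (a1 - 1, a2, a3, a4 - 1, a5 - 1, a6)) ∨
      (sysC a1 a2 a3 a4 a5 a6 ∧ t' = (a1, a2 - 1, a3, a4 - 1, a5, a6 - 1)) ∨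
      (sysD a1 a2 a3 a4 a5 a6 ∧ t' = (a1, a2, a3 - 1, a4, a5 - 1, a6 - 1))

/-- Every 6-tuple of nonnegative integers can be brought, by a finite sequence of
reduction steps, to a tuple that is either the zero tuple or S-minimal. -/
theorem stmt_5 (t : ℕ × ℕ × ℕ × ℕ × ℕ × ℕ) :
    ∃ u : ℕ × ℕ × ℕ × ℕ × ℕ × ℕ, Relation.ReflTransGen Step t u ∧
      (u = (0, 0, 0, 0, 0, 0) ∨
        SMinimal u.1 u.2.1 u.2.2.1 u.2.2.2.1 u.2.2.2.2.1 u.2.2.2.2.2) := by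
  obtain ⟨a1, a2, a3, a4, a5, a6⟩ := t
  have H : ∀ n a1 a2 a3 a4 a5 a6, a1 + a2 + a3 + a4 + a5 + a6 ≤ n →
      ∃ u : ℕ × ℕ × ℕ × ℕ × ℕ × ℕ,
        Relation.ReflTransGen Step (a1, a2, a3, a4, a5, a6) u ∧
        (u = (0, 0, 0, 0, 0, 0) ∨
          SMinimal u.1 u.2.1 u.2.2.1 u.2.2.2.1 u.2.2.2.2.1 u.2.2.2.2.2) := by
    intro n
    induction n with
    | zero =>
      intro a1 a2 a3 a4 a5 a6 h
      refine ⟨_, Relation.ReflTransGen.refl, Or.inl ?_⟩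
      have : a1 = 0 ∧ a2 = 0 ∧ a3 = 0 ∧ a4 = 0 ∧ a5 = 0 ∧ a6 = 0 := by omega
      obtain ⟨h1, h2, h3, h4, h5, h6⟩ := this
      subst h1 h2 h3 h4 h5 h6; rfl
    | succ n ih =>
      intro a1 a2 a3 a4 a5 a6 h
      by_cases h0 : a1 = 0 ∧ a2 = 0 ∧ a3 = 0 ∧ a4 = 0 ∧ a5 = 0 ∧ a6 = 0
      · obtain ⟨h1, h2, h3, h4, h5, h6⟩ := h0
        subst h1 h2 h3 h4 h5 h6
        exact ⟨_, Relation.ReflTransGen.refl, Or.inl rfl⟩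
      by_cases hA : sysA a1 a2 a3 a4 a5 a6
      · obtain ⟨u, hu, hm⟩ := ih (a1-1) (a2-1) (a3-1) a4 a5 a6
          (by obtain ⟨x, y, z⟩ := hA; omega)
        exact ⟨u, Relation.ReflTransGen.head (Or.inl ⟨hA, rfl⟩) hu, hm⟩
      by_cases hB : sysB a1 a2 a3 a4 a5 a6
      · obtain ⟨u, hu, hm⟩ := ih (a1-1) a2 a3 (a4-1) (a5-1) a6
          (by obtain ⟨x, y, z⟩ := hB; omega)
        exact ⟨u, Relation.ReflTransGen.head (Or.inr (Or.inl ⟨hB, rfl⟩)) hu, hm⟩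
      by_cases hC : sysC a1 a2 a3 a4 a5 a6
      · obtain ⟨u, hu, hm⟩ := ih a1 (a2-1) a3 (a4-1) a5 (a6-1)
          (by obtain ⟨x, y, z⟩ := hC; omega)
        exact ⟨u, Relation.ReflTransGen.head (Or.inr (Or.inr (Or.inl ⟨hC, rfl⟩))) hu, hm⟩
      by_cases hD : sysD a1 a2 a3 a4 a5 a6
      · obtain ⟨u, hu, hm⟩ := ih a1 a2 (a3-1) a4 (a5-1) (a6-1)
          (by obtain ⟨x, y, z⟩ := hD; omega)
        exact ⟨u, Relation.ReflTransGen.head (Or.inr (Or.inr (Or.inr ⟨hD, rfl⟩))) hu, hm⟩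
      · exact ⟨_, Relation.ReflTransGen.refl, Or.inr ⟨h0, hA, hB, hC, hD⟩⟩
  exact H (a1 + a2 + a3 + a4 + a5 + a6) a1 a2 a3 a4 a5 a6 le_rfl
end

section
/- Let (a1,...,a6) be nonnegative integers with a6 >= ai for all i, a6 > 0, and satisfying a1 > a3+a5, a1 > a2+a4, a6 > a4+a5 and a6 > a2+a3 (i.e. the tuple is S-minimal with a6 maximal). Then the tetrahedral ideal I(a1,...,a6) is generated by the set of monomials a^{l1} b^{l2} c^{l3} d^{l4} with l1+l2 = a1, l3+l4 = a6, l1+l3 >= a2, l1+l4 >= a3, l2+l3 >= a4 and l2+l4 >= a5. In particular, I(a1,...,a6) is generated by monomials of total degree a1+a6. -/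
open MvPolynomial

/-!
A monomial lies in `(x_i, x_j)^n` exactly when its exponents satisfy `e_i + e_j ≥ n`, so the
tetrahedral ideal is the monomial ideal of the exponent vectors `l` obeying the six pair bounds
`l1 + l2 ≥ a1, …, l3 + l4 ≥ a6`. Such a vector can be lowered one coordinate at a time, staying
inside the ideal, until `l1 + l2 = a1` and `l3 + l4 = a6`: if, say, `l1 + l2 > a1` but neither
`l1` nor `l2` can be lowered, then one bound through `a` and one through `b` are tight, and adding
them contradicts `a1 > a2 + a4`, `a1 > a3 + a5`, or `a1 + a6 > a2 + a5, a3 + a4` (which follow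
from the hypotheses). What remains are exactly the generators.
-/

namespace MvPolynomial

variable {σ R : Type*} [CommSemiring R]

theorem pow_span_X_pair_le (i j : σ) (n : ℕ) :
    Ideal.span {X i, X j} ^ n ≤
      Ideal.span ((monomial · (1 : R)) '' {m : σ →₀ ℕ | n ≤ m i + m j}) := by
  classical
  induction n with
  | zero =>
    rw [pow_zero, Ideal.one_eq_top, top_le_iff, Ideal.eq_top_iff_one]
    exact Ideal.subset_span ⟨0, by simp, rfl⟩
  | succ n ih =>
    have span_le : Ideal.span {X i, X j} ≤
        Ideal.span ((monomial · (1 : R)) '' {m : σ →₀ ℕ | 1 ≤ m i + m j}) := by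
      rw [Ideal.span_le, Set.insert_subset_iff, Set.singleton_subset_iff]
      exact ⟨Ideal.subset_span ⟨Finsupp.single i 1, by simp, rfl⟩,
        Ideal.subset_span ⟨Finsupp.single j 1, by simp, rfl⟩⟩
    rw [pow_succ]
    refine (Ideal.mul_mono ih span_le).trans (Ideal.mul_le.mpr fun p hp q hq => ?_)
    rw [mem_ideal_span_monomial_image] at hp hq ⊢
    intro m hm
    obtain ⟨u, hu, v, hv, rfl⟩ := Finset.mem_add.mp (support_mul p q hm)
    obtain ⟨u', hu', hu'u⟩ := hp u hu
    obtain ⟨v', hv', hv'v⟩ := hq v hv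
    refine ⟨u' + v', ?_, add_le_add hu'u hv'v⟩
    simp only [Set.mem_ofPred_eq, Finsupp.add_apply] at hu' hv' ⊢
    omega

theorem le_add_of_mem_pow_span_X_pair {i j : σ} {n : ℕ} {p : MvPolynomial σ R}
    (hp : p ∈ Ideal.span {X i, X j} ^ n) {m : σ →₀ ℕ} (hm : m ∈ p.support) :
    n ≤ m i + m j := by
  obtain ⟨m', hm', hm'm⟩ := mem_ideal_span_monomial_image.mp (pow_span_X_pair_le i j n hp) m hm
  exact hm'.trans (add_le_add (hm'm i) (hm'm j))

theorem monomial_mem_pow_span_X_pair {i j : σ} (hij : i ≠ j) {n : ℕ} {m : σ →₀ ℕ}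
    (h : n ≤ m i + m j) (r : R) :
    monomial m r ∈ Ideal.span {X i, X j} ^ n := by
  classical
  have hXij : (X i ^ m i * X j ^ m j : MvPolynomial σ R) ∈ Ideal.span {X i, X j} ^ n := by
    refine Ideal.pow_le_pow_right h ?_
    rw [pow_add]
    exact Ideal.mul_mem_mul (Ideal.pow_mem_pow (Ideal.subset_span (Set.mem_insert _ _)) _)
      (Ideal.pow_mem_pow (Ideal.subset_span (Set.mem_insert_of_mem _ (Set.mem_singleton _))) _)
  have hdvd : (X i ^ m i * X j ^ m j : MvPolynomial σ R) ∣ monomial m r := by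
    rw [X_pow_eq_monomial, X_pow_eq_monomial, monomial_mul, one_mul, monomial_dvd_monomial]
    refine ⟨Or.inr fun k => ?_, one_dvd r⟩
    simp only [Finsupp.add_apply, Finsupp.single_apply]
    split_ifs <;> simp_all
  exact Ideal.mem_of_dvd _ hdvd hXij

end MvPolynomial

theorem Finsupp.sub_single_one_lt {σ : Type*} {m : σ →₀ ℕ} {i : σ} (hi : 0 < m i) :
    m - Finsupp.single i 1 < m := by
  refine lt_of_le_of_ne tsub_le_self fun h => ?_
  have := DFunLike.congr_fun h i
  simp only [Finsupp.coe_tsub, Pi.sub_apply, Finsupp.single_eq_same] at this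
  omega

def tetExps (a1 a2 a3 a4 a5 a6 : ℕ) : Set (Fin 4 →₀ ℕ) :=
  {m | a1 ≤ m 0 + m 1 ∧ a2 ≤ m 0 + m 2 ∧ a3 ≤ m 0 + m 3 ∧
    a4 ≤ m 1 + m 2 ∧ a5 ≤ m 1 + m 3 ∧ a6 ≤ m 2 + m 3}

def tetGenExps (a1 a2 a3 a4 a5 a6 : ℕ) : Set (Fin 4 →₀ ℕ) :=
  {m | m 0 + m 1 = a1 ∧ m 2 + m 3 = a6 ∧
    a2 ≤ m 0 + m 2 ∧ a3 ≤ m 0 + m 3 ∧ a4 ≤ m 1 + m 2 ∧ a5 ≤ m 1 + m 3}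

theorem tetGenExps_subset_tetExps (a1 a2 a3 a4 a5 a6 : ℕ) :
    tetGenExps a1 a2 a3 a4 a5 a6 ⊆ tetExps a1 a2 a3 a4 a5 a6 := by
  rintro m ⟨h1, h6, h2, h3, h4, h5⟩
  exact ⟨h1.ge, h2, h3, h4, h5, h6.ge⟩

theorem mem_tetExps_of_mem_support {k : Type} [Field k] {a1 a2 a3 a4 a5 a6 : ℕ}
    {p : MvPolynomial (Fin 4) k} (hp : p ∈ tet k a1 a2 a3 a4 a5 a6) {m : Fin 4 →₀ ℕ}
    (hm : m ∈ p.support) : m ∈ tetExps a1 a2 a3 a4 a5 a6 := by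
  obtain ⟨⟨⟨⟨⟨hp1, hp2⟩, hp3⟩, hp4⟩, hp5⟩, hp6⟩ := hp
  exact ⟨le_add_of_mem_pow_span_X_pair hp1 hm, le_add_of_mem_pow_span_X_pair hp2 hm,
    le_add_of_mem_pow_span_X_pair hp3 hm, le_add_of_mem_pow_span_X_pair hp4 hm,
    le_add_of_mem_pow_span_X_pair hp5 hm, le_add_of_mem_pow_span_X_pair hp6 hm⟩

theorem monomial_mem_tet {k : Type} [Field k] {a1 a2 a3 a4 a5 a6 : ℕ} {m : Fin 4 →₀ ℕ}
    (hm : m ∈ tetExps a1 a2 a3 a4 a5 a6) (r : k) : monomial m r ∈ tet k a1 a2 a3 a4 a5 a6 := by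
  obtain ⟨h1, h2, h3, h4, h5, h6⟩ := hm
  exact ⟨⟨⟨⟨⟨monomial_mem_pow_span_X_pair (by decide) h1 r,
    monomial_mem_pow_span_X_pair (by decide) h2 r⟩, monomial_mem_pow_span_X_pair (by decide) h3 r⟩,
    monomial_mem_pow_span_X_pair (by decide) h4 r⟩, monomial_mem_pow_span_X_pair (by decide) h5 r⟩,
    monomial_mem_pow_span_X_pair (by decide) h6 r⟩

theorem exists_sub_single_mem_tetExps {a1 a2 a3 a4 a5 a6 : ℕ}
    (h1 : a3 + a5 < a1) (h2 : a2 + a4 < a1) (h3 : a4 + a5 < a6) (h4 : a2 + a3 < a6)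
    {m : Fin 4 →₀ ℕ} (hm : m ∈ tetExps a1 a2 a3 a4 a5 a6)
    (hlt : a1 < m 0 + m 1 ∨ a6 < m 2 + m 3) :
    ∃ i, 0 < m i ∧ m - Finsupp.single i 1 ∈ tetExps a1 a2 a3 a4 a5 a6 := by
  by_contra! H
  have H0 := H 0
  have H1 := H 1
  have H2 := H 2
  have H3 := H 3
  simp only [tetExps, Set.mem_ofPred_eq, Finsupp.coe_tsub, Pi.sub_apply, Finsupp.single_eq_same,
    ne_eq, Finsupp.single_eq_of_ne, tsub_zero, Fin.reduceEq, not_and, not_le,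
    not_false_eq_true] at hm H0 H1 H2 H3
  omega

theorem exists_mem_tetGenExps_le {a1 a2 a3 a4 a5 a6 : ℕ}
    (h1 : a3 + a5 < a1) (h2 : a2 + a4 < a1) (h3 : a4 + a5 < a6) (h4 : a2 + a3 < a6)
    {m : Fin 4 →₀ ℕ} (hm : m ∈ tetExps a1 a2 a3 a4 a5 a6) :
    ∃ n ∈ tetGenExps a1 a2 a3 a4 a5 a6, n ≤ m := by
  induction m using WellFoundedLT.induction with
  | _ m ih =>
    by_cases hlt : a1 < m 0 + m 1 ∨ a6 < m 2 + m 3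
    · obtain ⟨i, hi, hmi⟩ := exists_sub_single_mem_tetExps h1 h2 h3 h4 hm hlt
      obtain ⟨n, hn, hnm⟩ := ih _ (Finsupp.sub_single_one_lt hi) hmi
      exact ⟨n, hn, hnm.trans tsub_le_self⟩
    · obtain ⟨g1, g2, g3, g4, g5, g6⟩ := hm
      exact ⟨m, ⟨by omega, by omega, g2, g3, g4, g5⟩, le_rfl⟩

theorem X_pow_mul_X_pow_mul_X_pow_mul_X_pow_eq_monomial {R : Type*} [CommSemiring R]
    (m : Fin 4 →₀ ℕ) :
    X 0 ^ m 0 * X 1 ^ m 1 * X 2 ^ m 2 * X 3 ^ m 3 = monomial m (1 : R) := by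
  rw [monomial_eq, C_1, one_mul, Finsupp.prod_fintype _ _ fun _ => pow_zero _, Fin.prod_univ_four]

theorem setOf_tet_generators_eq_image {R : Type*} [CommSemiring R] (a1 a2 a3 a4 a5 a6 : ℕ) :
    {p : MvPolynomial (Fin 4) R | ∃ l1 l2 l3 l4 : ℕ, l1 + l2 = a1 ∧ l3 + l4 = a6 ∧
        a2 ≤ l1 + l3 ∧ a3 ≤ l1 + l4 ∧ a4 ≤ l2 + l3 ∧ a5 ≤ l2 + l4 ∧
        p = X 0 ^ l1 * X 1 ^ l2 * X 2 ^ l3 * X 3 ^ l4} =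
      (monomial · 1) '' tetGenExps a1 a2 a3 a4 a5 a6 := by
  ext p
  constructor
  · rintro ⟨l1, l2, l3, l4, h1, h2, h3, h4, h5, h6, rfl⟩
    refine ⟨Finsupp.equivFunOnFinite.symm ![l1, l2, l3, l4],
      by simpa [tetGenExps] using ⟨h1, h2, h3, h4, h5, h6⟩, ?_⟩
    simpa using (X_pow_mul_X_pow_mul_X_pow_mul_X_pow_eq_monomial (R := R)
      (Finsupp.equivFunOnFinite.symm ![l1, l2, l3, l4])).symm
  · rintro ⟨m, hm, rfl⟩
    exact ⟨m 0, m 1, m 2, m 3, hm.1, hm.2.1, hm.2.2.1, hm.2.2.2.1, hm.2.2.2.2.1, hm.2.2.2.2.2,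
      (X_pow_mul_X_pow_mul_X_pow_mul_X_pow_eq_monomial m).symm⟩

theorem totalDegree_monomial_of_mem_tetGenExps {R : Type*} [CommSemiring R] [Nontrivial R]
    {a1 a2 a3 a4 a5 a6 : ℕ} {m : Fin 4 →₀ ℕ} (hm : m ∈ tetGenExps a1 a2 a3 a4 a5 a6) :
    (monomial m (1 : R)).totalDegree = a1 + a6 := by
  rw [totalDegree_monomial _ one_ne_zero, Finsupp.sum_fintype _ _ fun _ => rfl,
    Fin.sum_univ_four]
  obtain ⟨hab, hcd, -⟩ := hm
  omega

theorem stmt_6_general (k : Type) [Field k] (a1 a2 a3 a4 a5 a6 : ℕ)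
    (h1 : a3 + a5 < a1) (h2 : a2 + a4 < a1) (h3 : a4 + a5 < a6) (h4 : a2 + a3 < a6) :
    letI G : Set (MvPolynomial (Fin 4) k) :=
      {p | ∃ l1 l2 l3 l4 : ℕ, l1 + l2 = a1 ∧ l3 + l4 = a6 ∧
        a2 ≤ l1 + l3 ∧ a3 ≤ l1 + l4 ∧ a4 ≤ l2 + l3 ∧ a5 ≤ l2 + l4 ∧
        p = X 0 ^ l1 * X 1 ^ l2 * X 2 ^ l3 * X 3 ^ l4}
    tet k a1 a2 a3 a4 a5 a6 = Ideal.span G ∧ ∀ p ∈ G, p.totalDegree = a1 + a6 := by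
  rw [setOf_tet_generators_eq_image]
  refine ⟨le_antisymm ?_ ?_, ?_⟩
  · intro p hp
    exact mem_ideal_span_monomial_image.mpr fun m hm =>
      exists_mem_tetGenExps_le h1 h2 h3 h4 (mem_tetExps_of_mem_support hp hm)
  · rw [Ideal.span_le]
    rintro _ ⟨m, hm, rfl⟩
    exact monomial_mem_tet (tetGenExps_subset_tetExps a1 a2 a3 a4 a5 a6 hm) 1
  · rintro _ ⟨m, hm, rfl⟩
    exact totalDegree_monomial_of_mem_tetGenExps hm

/-- For an S-minimal tetrahedral curve with `a6` maximal, the ideal is generated by the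
monomials `a^{l1} b^{l2} c^{l3} d^{l4}` with `l1+l2 = a1`, `l3+l4 = a6`, `l1+l3 ≥ a2`,
`l1+l4 ≥ a3`, `l2+l3 ≥ a4`, `l2+l4 ≥ a5`; in particular it is generated by monomials of
total degree `a1 + a6`. -/
theorem stmt_6 (k : Type) [Field k] (a1 a2 a3 a4 a5 a6 : ℕ)
    (hmax : a1 ≤ a6 ∧ a2 ≤ a6 ∧ a3 ≤ a6 ∧ a4 ≤ a6 ∧ a5 ≤ a6) (hpos : 0 < a6)
    (h1 : a3 + a5 < a1) (h2 : a2 + a4 < a1) (h3 : a4 + a5 < a6) (h4 : a2 + a3 < a6) :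
    letI G : Set (MvPolynomial (Fin 4) k) :=
      {p | ∃ l1 l2 l3 l4 : ℕ, l1 + l2 = a1 ∧ l3 + l4 = a6 ∧
        a2 ≤ l1 + l3 ∧ a3 ≤ l1 + l4 ∧ a4 ≤ l2 + l3 ∧ a5 ≤ l2 + l4 ∧
        p = X 0 ^ l1 * X 1 ^ l2 * X 2 ^ l3 * X 3 ^ l4}
    tet k a1 a2 a3 a4 a5 a6 = Ideal.span G ∧ ∀ p ∈ G, p.totalDegree = a1 + a6 :=
  stmt_6_general k a1 a2 a3 a4 a5 a6 h1 h2 h3 h4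
end

section
/- For every integer n >= 1 there is an isomorphism of R-modules Hom_R((a,b)^n, R/(a,b)^n) ≅ (R/(a,b))^{n(n+1)}, i.e. the R-module of R-linear maps from the ideal (a,b)^n to the quotient R/(a,b)^n is a free R/(a,b)-module of rank n(n+1). (In the graded setting this isomorphism is an isomorphism of graded modules after a twist by 1.) -/
open MvPolynomial

namespace Stmt15
variable (k : Type) [Field k]

noncomputable abbrev Iab (k : Type) [Field k] : Ideal (MvPolynomial (Fin 4) k) :=
  Ideal.span {X 0, X 1}

/-- The ideal of polynomials all of whose monomials have `(a,b)`-degree at least `j`. -/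
def Jdeg (k : Type) [Field k] (j : ℕ) : Ideal (MvPolynomial (Fin 4) k) where
  carrier := {F | ∀ m ∈ F.support, j ≤ m 0 + m 1}
  add_mem' := by
    intro F G hF hG m hm
    rcases Finset.mem_union.mp (MvPolynomial.support_add hm) with h | h
    · exact hF m h
    · exact hG m h
  zero_mem' := by intro m hm; simp at hm
  smul_mem' := by
    intro r F hF m hm
    rw [smul_eq_mul] at hm
    rcases Finset.mem_add.mp (MvPolynomial.support_mul r F hm) with ⟨u, hu, v, hv, rfl⟩
    have := hF v hv
    simp only [Finsupp.add_apply]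
    omega

lemma Iab_le_Jdeg_one : Iab k ≤ Jdeg k 1 := by
  rw [Ideal.span_le]
  intro s hs
  rcases hs with h | h
  · subst h; intro m hm
    rw [MvPolynomial.support_X] at hm
    simp at hm; subst hm; simp
  · rw [Set.mem_singleton_iff] at h
    subst h; intro m hm
    rw [MvPolynomial.support_X] at hm
    simp at hm; subst hm; simp

lemma pow_le_Jdeg (j : ℕ) : (Iab k) ^ j ≤ Jdeg k j := by
  induction j with
  | zero =>
    intro F _ m hm; omega
  | succ j ih =>
    rw [pow_succ, Ideal.mul_le]
    intro r hr s hs m hm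
    rcases Finset.mem_add.mp (MvPolynomial.support_mul r s hm) with ⟨u, hu, v, hv, rfl⟩
    have h1 := ih hr u hu
    have h2 := Iab_le_Jdeg_one k hs v hv
    simp only [Finsupp.add_apply]
    omega

lemma monomial_mem_pow (j : ℕ) (v : Fin 4 →₀ ℕ) (c : k) (hv : j ≤ v 0 + v 1) :
    (monomial v c : MvPolynomial (Fin 4) k) ∈ (Iab k) ^ j := by
  have hX0 : (X 0 : MvPolynomial (Fin 4) k) ∈ Iab k := Ideal.subset_span (by simp)
  have hX1 : (X 1 : MvPolynomial (Fin 4) k) ∈ Iab k := Ideal.subset_span (by simp)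
  have key : (X 0 : MvPolynomial (Fin 4) k) ^ (v 0) * (X 1) ^ (v 1) ∈ (Iab k) ^ (v 0 + v 1) := by
    rw [pow_add]
    exact Ideal.mul_mem_mul (Ideal.pow_mem_pow hX0 _) (Ideal.pow_mem_pow hX1 _)
  have key2 : (X 0 : MvPolynomial (Fin 4) k) ^ (v 0) * (X 1) ^ (v 1) ∈ (Iab k) ^ j :=
    Ideal.pow_le_pow_right hv key
  have hsum : (v - Finsupp.single 0 (v 0) - Finsupp.single 1 (v 1))
      + (Finsupp.single 0 (v 0) + Finsupp.single 1 (v 1)) = v := by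
    ext i
    simp only [Finsupp.add_apply, Finsupp.tsub_apply, Finsupp.single_apply]
    fin_cases i <;> simp
  have heq : (monomial v c : MvPolynomial (Fin 4) k)
      = monomial (v - Finsupp.single 0 (v 0) - Finsupp.single 1 (v 1)) c
        * (X 0 ^ (v 0) * X 1 ^ (v 1)) := by
    rw [X_pow_eq_monomial, X_pow_eq_monomial, monomial_mul, mul_one, monomial_mul, mul_one, hsum]
  rw [heq]
  exact Ideal.mul_mem_left _ _ key2

lemma mem_pow_iff (j : ℕ) (F : MvPolynomial (Fin 4) k) :
    F ∈ (Iab k) ^ j ↔ ∀ m ∈ F.support, j ≤ m 0 + m 1 := by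
  constructor
  · exact fun h => pow_le_Jdeg k j h
  · intro h
    rw [F.as_sum]
    exact Submodule.sum_mem _ fun v hv => monomial_mem_pow k j v _ (h v hv)

/-- divisibility by `X 1` in terms of supports -/
lemma X1_dvd_iff (F : MvPolynomial (Fin 4) k) :
    (X 1 : MvPolynomial (Fin 4) k) ∣ F ↔ ∀ m ∈ F.support, 1 ≤ m 1 := by
  constructor
  · rintro ⟨q, rfl⟩ m hm
    rcases Finset.mem_add.mp (MvPolynomial.support_mul _ _ hm) with ⟨u, hu, v, hv, rfl⟩
    rw [MvPolynomial.support_X] at hu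
    simp only [Finset.mem_singleton] at hu
    subst hu
    simp [Finsupp.add_apply]
  · intro h
    have : F = X 1 * ∑ v ∈ F.support, monomial (v - Finsupp.single 1 1) (coeff v F) := by
      rw [Finset.mul_sum]
      conv_lhs => rw [F.as_sum]
      refine Finset.sum_congr rfl fun v hv => ?_
      have h1 := h v hv
      rw [MvPolynomial.X, monomial_mul, one_mul]
      have hv : Finsupp.single 1 1 + (v - Finsupp.single 1 1) = v := by
        ext i
        rcases eq_or_ne i 1 with rfl | hne
        · simp only [Finsupp.add_apply, Finsupp.tsub_apply, Finsupp.single_eq_same]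
          omega
        · simp [Finsupp.single_apply, Ne.symm hne]
      rw [hv]
    exact ⟨_, this⟩

/-- the monomial generators of `Iab^n` -/
noncomputable def mgen (k : Type) [Field k] (n i : ℕ) : MvPolynomial (Fin 4) k :=
  X 0 ^ i * X 1 ^ (n - i)

lemma mgen_mem (n : ℕ) (i : ℕ) (hi : i ≤ n) : mgen k n i ∈ (Iab k) ^ n := by
  have hX0 : (X 0 : MvPolynomial (Fin 4) k) ∈ Iab k := Ideal.subset_span (by simp)
  have hX1 : (X 1 : MvPolynomial (Fin 4) k) ∈ Iab k := Ideal.subset_span (by simp)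
  have : mgen k n i ∈ (Iab k) ^ (i + (n - i)) := by
    rw [pow_add]
    exact Ideal.mul_mem_mul (Ideal.pow_mem_pow hX0 _) (Ideal.pow_mem_pow hX1 _)
  have h2 : i + (n - i) = n := by omega
  rwa [h2] at this

/-- the evaluation map sending coefficients to a combination of the monomial generators -/
noncomputable def piMap (k : Type) [Field k] (n : ℕ) :
    (Fin (n+1) → MvPolynomial (Fin 4) k) →ₗ[MvPolynomial (Fin 4) k] MvPolynomial (Fin 4) k where
  toFun g := ∑ i : Fin (n+1), g i * mgen k n i
  map_add' g h := by simp [add_mul, Finset.sum_add_distrib]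
  map_smul' r g := by simp [Finset.mul_sum, mul_assoc]

lemma piMap_single (n : ℕ) (i : Fin (n+1)) (c : MvPolynomial (Fin 4) k) :
    piMap k n (Pi.single i c) = c * mgen k n i := by
  simp only [piMap, LinearMap.coe_mk, AddHom.coe_mk]
  rw [Finset.sum_eq_single i]
  · simp
  · intro j _ hj; simp [Pi.single_eq_of_ne hj]
  · simp

lemma range_piMap (n : ℕ) : LinearMap.range (piMap k n) = ((Iab k) ^ n : Ideal _) := by
  apply le_antisymm
  · rintro _ ⟨g, rfl⟩
    show ∑ i : Fin (n+1), g i * mgen k n i ∈ _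
    exact Submodule.sum_mem _ fun i _ => Ideal.mul_mem_left _ _ (mgen_mem k n (i : ℕ) (Nat.lt_succ_iff.mp i.2))
  · intro F hF
    rw [mem_pow_iff] at hF
    rw [F.as_sum]
    refine Submodule.sum_mem _ fun v hv => ?_
    have hdeg := hF v hv
    set i : ℕ := min (v 0) n with hi
    have hi0 : i ≤ v 0 := min_le_left _ _
    have hi1 : n - i ≤ v 1 := by omega
    have hin : i ≤ n := min_le_right _ _
    have hsum : (v - Finsupp.single 0 i - Finsupp.single 1 (n - i))
        + (Finsupp.single 0 i + Finsupp.single 1 (n - i)) = v := by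
      ext l
      simp only [Finsupp.add_apply, Finsupp.tsub_apply, Finsupp.single_apply]
      fin_cases l <;> simp <;> omega
    have heq : (monomial v (coeff v F) : MvPolynomial (Fin 4) k)
        = monomial (v - Finsupp.single 0 i - Finsupp.single 1 (n - i)) (coeff v F)
          * mgen k n i := by
      rw [mgen, X_pow_eq_monomial, X_pow_eq_monomial, monomial_mul, mul_one, monomial_mul,
        mul_one, hsum]
    rw [heq]
    refine ⟨Pi.single ⟨i, by omega⟩
      (monomial (v - Finsupp.single 0 i - Finsupp.single 1 (n - i)) (coeff v F)), ?_⟩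
    rw [piMap_single]


lemma X1_not_dvd_X0_pow (m : ℕ) : ¬ (X 1 : MvPolynomial (Fin 4) k) ∣ (X 0 : MvPolynomial (Fin 4) k) ^ m := by
  intro h
  rw [X1_dvd_iff] at h
  have hsup : (Finsupp.single (0 : Fin 4) m) ∈ ((X 0 : MvPolynomial (Fin 4) k) ^ m).support := by
    rw [mem_support_iff, X_pow_eq_monomial, coeff_monomial, if_pos rfl]
    exact one_ne_zero
  have := h _ hsup
  simp [Finsupp.single_apply] at this

/-- Key syzygy lemma: relations between values on the monomial generators. -/
lemma syzygy (M : Type) [AddCommGroup M] [Module (MvPolynomial (Fin 4) k) M] :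
    ∀ (n : ℕ) (f : ℕ → M) (_ : ∀ i < n, (X 0 : MvPolynomial (Fin 4) k) • f i = (X 1 : MvPolynomial (Fin 4) k) • f (i+1))
      (g : ℕ → MvPolynomial (Fin 4) k)
      (_ : ∑ i ∈ Finset.range (n+1), g i * mgen k n i = 0),
    ∑ i ∈ Finset.range (n+1), g i • f i = 0 := by
  intro n
  induction n with
  | zero =>
    intro f _ g hg
    simp only [zero_add, Finset.range_one, Finset.sum_singleton, mgen, pow_zero, Nat.sub_zero,
      one_mul, mul_one] at hg ⊢
    rw [hg, zero_smul]
  | succ n ih =>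
    intro f hf g hg
    -- `X 1` divides `g (n+1)`
    have hdvd : (X 1 : MvPolynomial (Fin 4) k) ∣ g (n+1) := by
      have h1 : g (n+1) * X 0 ^ (n+1)
          = - ∑ i ∈ Finset.range (n+1), g i * mgen k (n+1) i := by
        rw [Finset.sum_range_succ] at hg
        have : mgen k (n+1) (n+1) = X 0 ^ (n+1) := by
          simp [mgen]
        rw [this] at hg
        linear_combination hg
      have h2 : (X 1 : MvPolynomial (Fin 4) k) ∣ g (n+1) * X 0 ^ (n+1) := by
        rw [h1, dvd_neg]
        apply Finset.dvd_sum
        intro i hi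
        rw [Finset.mem_range] at hi
        have : mgen k (n+1) i = (X 0 ^ i * X 1 ^ (n - i)) * X 1 := by
          rw [mgen]
          have : n + 1 - i = (n - i) + 1 := by omega
          rw [this, pow_succ]
          ring
        rw [this, ← mul_assoc]
        exact dvd_mul_left _ _
      -- X 1 is "prime enough" here: use support characterization
      rw [X1_dvd_iff] at h2 ⊢
      intro m hm
      by_contra hcon
      push_neg at hcon
      interval_cases h : m 1
      · have hco : coeff (m + Finsupp.single 0 (n+1)) (g (n+1) * X 0 ^ (n+1)) = coeff m (g (n+1)) := by
          rw [X_pow_eq_monomial, coeff_mul_monomial']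
          rw [if_pos le_add_self, mul_one]
          congr 1
          ext l
          simp [Finsupp.add_apply, Finsupp.single_apply]
        have hne : coeff (m + Finsupp.single 0 (n+1)) (g (n+1) * X 0 ^ (n+1)) ≠ 0 := by
          rw [hco]
          exact (mem_support_iff).mp hm
        have := h2 _ ((mem_support_iff).mpr hne)
        simp [Finsupp.add_apply, Finsupp.single_apply, h] at this
    obtain ⟨h0, hh0⟩ := hdvd
    -- modified coefficients
    set g' : ℕ → MvPolynomial (Fin 4) k := fun i => if i = n then g n + X 0 * h0 else g i with hg'
    have hkey : (X 1 : MvPolynomial (Fin 4) k) * ∑ i ∈ Finset.range (n+1), g' i * mgen k n i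
        = ∑ i ∈ Finset.range (n+1+1), g i * mgen k (n+1) i := by
      rw [Finset.mul_sum, Finset.sum_range_succ,
        Finset.sum_range_succ (fun i => g i * mgen k (n+1) i),
        Finset.sum_range_succ (fun i => g i * mgen k (n+1) i)]
      have hrest : ∀ i ∈ Finset.range n, X 1 * (g' i * mgen k n i) = g i * mgen k (n+1) i := by
        intro i hi
        rw [Finset.mem_range] at hi
        rw [hg']
        simp only [if_neg (Nat.ne_of_lt hi)]
        rw [mgen, mgen]
        have : n + 1 - i = (n - i) + 1 := by omega
        rw [this, pow_succ]
        ring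
      rw [Finset.sum_congr rfl hrest]
      have hg'n : g' n = g n + X 0 * h0 := by rw [hg']; simp
      have e1 : mgen k n n = X 0 ^ n := by simp [mgen]
      have e2 : mgen k (n+1) n = X 0 ^ n * X 1 := by
        rw [mgen]
        have : n + 1 - n = 1 := by omega
        rw [this, pow_one]
      have e3 : mgen k (n+1) (n+1) = X 0 ^ (n+1) := by simp [mgen]
      rw [hg'n, hh0, e1, e2, e3]
      ring
    have hzero : ∑ i ∈ Finset.range (n+1), g' i * mgen k n i = 0 := by
      have h := hkey.trans hg
      rcases mul_eq_zero.mp h with h | h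
      · exact absurd h (X_ne_zero 1)
      · exact h
    have hmain := ih f (fun i hi => hf i (by omega)) g' hzero
    -- now conclude
    rw [Finset.sum_range_succ]
    rw [Finset.sum_range_succ] at hmain
    have hlast2 : g' n • f n = g n • f n + (X 0 * h0) • f n := by
      rw [hg']; simp [add_smul]
    rw [hlast2] at hmain
    have hswap : (X 0 * h0) • f n = g (n+1) • f (n+1) := by
      rw [hh0, mul_comm (X 1) h0, mul_comm (X 0 : MvPolynomial (Fin 4) k) h0, mul_smul, mul_smul,
        hf n (by omega)]
    rw [hswap] at hmain
    have hrest2 : ∀ i ∈ Finset.range n, g' i • f i = g i • f i := by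
      intro i hi
      rw [Finset.mem_range] at hi
      rw [hg']
      simp [if_neg (Nat.ne_of_lt hi)]
    rw [Finset.sum_congr rfl hrest2] at hmain
    rw [← hmain, Finset.sum_range_succ]
    abel


/-- relation between consecutive monomial generators -/
lemma mgen_rel (n i : ℕ) (hi : i < n) :
    (X 0 : MvPolynomial (Fin 4) k) * mgen k n i = (X 1) * mgen k n (i+1) := by
  rw [mgen, mgen]
  have : n - i = (n - (i+1)) + 1 := by omega
  rw [this, pow_succ, pow_succ]
  ring

section Equiv1

variable (n : ℕ)

/-- the submodule of tuples satisfying the relations -/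
noncomputable def Ksub (k : Type) [Field k] (n : ℕ) :
    Submodule (MvPolynomial (Fin 4) k)
      (Fin (n+1) → (MvPolynomial (Fin 4) k ⧸ (Iab k ^ n : Ideal (MvPolynomial (Fin 4) k)))) where
  carrier := {f | ∀ (i : ℕ) (h : i < n),
    (X 0 : MvPolynomial (Fin 4) k) • f ⟨i, by omega⟩ = (X 1 : MvPolynomial (Fin 4) k) • f ⟨i+1, by omega⟩}
  add_mem' := by
    intro f g hf hg i h
    simp only [Pi.add_apply, smul_add]
    rw [hf i h, hg i h]
  zero_mem' := by intro i h; simp only [Pi.zero_apply, smul_zero]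
  smul_mem' := by
    intro r f hf i h
    simp only [Pi.smul_apply]
    rw [smul_comm (X 0 : MvPolynomial (Fin 4) k) r, smul_comm (X 1 : MvPolynomial (Fin 4) k) r,
      hf i h]

/-- evaluation of a hom on the monomial generators -/
noncomputable def Phi (k : Type) [Field k] (n : ℕ) :
    ((↥(Iab k ^ n) →ₗ[MvPolynomial (Fin 4) k]
        (MvPolynomial (Fin 4) k ⧸ (Iab k ^ n : Ideal (MvPolynomial (Fin 4) k)))))
      →ₗ[MvPolynomial (Fin 4) k]
    (Fin (n+1) → (MvPolynomial (Fin 4) k ⧸ (Iab k ^ n : Ideal (MvPolynomial (Fin 4) k)))) where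
  toFun φ := fun i => φ ⟨mgen k n i, mgen_mem k n i (Nat.lt_succ_iff.mp i.2)⟩
  map_add' φ ψ := rfl
  map_smul' r φ := rfl

lemma Phi_mem_Ksub (φ : ↥(Iab k ^ n) →ₗ[MvPolynomial (Fin 4) k]
    (MvPolynomial (Fin 4) k ⧸ (Iab k ^ n : Ideal (MvPolynomial (Fin 4) k)))) :
    Phi k n φ ∈ Ksub k n := by
  intro i h
  have h1 : (X 0 : MvPolynomial (Fin 4) k) •
      (⟨mgen k n i, mgen_mem k n i (by omega)⟩ : ↥(Iab k ^ n))
      = (X 1 : MvPolynomial (Fin 4) k) • ⟨mgen k n (i+1), mgen_mem k n (i+1) (by omega)⟩ := by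
    apply Subtype.ext
    simp only [SetLike.mk_smul_mk, smul_eq_mul]
    exact mgen_rel k n i h
  show (X 0 : MvPolynomial (Fin 4) k) • φ _ = (X 1 : MvPolynomial (Fin 4) k) • φ _
  rw [← map_smul, ← map_smul, h1]

/-- the corestriction of `piMap` to the ideal power -/
noncomputable def piMap' (k : Type) [Field k] (n : ℕ) :
    (Fin (n+1) → MvPolynomial (Fin 4) k) →ₗ[MvPolynomial (Fin 4) k] ↥(Iab k ^ n) :=
  (piMap k n).codRestrict (Iab k ^ n : Ideal (MvPolynomial (Fin 4) k))
    (fun g => by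
      have : piMap k n g ∈ LinearMap.range (piMap k n) := ⟨g, rfl⟩
      rwa [range_piMap] at this)

lemma piMap'_surj : Function.Surjective (piMap' k n) := by
  rintro ⟨x, hx⟩
  rw [← range_piMap k n] at hx
  obtain ⟨g, hg⟩ := hx
  exact ⟨g, Subtype.ext hg⟩

/-- construct a hom from a tuple satisfying the relations -/
noncomputable def psiMap (k : Type) [Field k] (n : ℕ)
    (f : Fin (n+1) → (MvPolynomial (Fin 4) k ⧸ (Iab k ^ n : Ideal (MvPolynomial (Fin 4) k)))) :
    (Fin (n+1) → MvPolynomial (Fin 4) k) →ₗ[MvPolynomial (Fin 4) k]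
      (MvPolynomial (Fin 4) k ⧸ (Iab k ^ n : Ideal (MvPolynomial (Fin 4) k))) where
  toFun g := ∑ i : Fin (n+1), g i • f i
  map_add' g h := by simp [add_smul, Finset.sum_add_distrib]
  map_smul' r g := by simp [Finset.smul_sum, mul_smul]

lemma psiMap_single (f : Fin (n+1) → (MvPolynomial (Fin 4) k ⧸ (Iab k ^ n : Ideal (MvPolynomial (Fin 4) k))))
    (i : Fin (n+1)) (c : MvPolynomial (Fin 4) k) :
    psiMap k n f (Pi.single i c) = c • f i := by
  simp only [psiMap, LinearMap.coe_mk, AddHom.coe_mk]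
  rw [Finset.sum_eq_single i]
  · rw [Pi.single_eq_same]
  · intro j _ hj; rw [Pi.single_eq_of_ne hj, zero_smul]
  · intro h; exact absurd (Finset.mem_univ i) h

lemma ker_le (f : Fin (n+1) → (MvPolynomial (Fin 4) k ⧸ (Iab k ^ n : Ideal (MvPolynomial (Fin 4) k))))
    (hf : f ∈ Ksub k n) :
    LinearMap.ker (piMap' k n) ≤ LinearMap.ker (psiMap k n f) := by
  intro g hg
  have hg0 : piMap k n g = 0 := by
    have := congrArg (Subtype.val) (LinearMap.mem_ker.mp hg)
    exact this
  rw [LinearMap.mem_ker]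
  -- convert to ℕ-indexed sums
  set g' : ℕ → MvPolynomial (Fin 4) k := fun i => if h : i < n+1 then g ⟨i, h⟩ else 0 with hg'
  set f' : ℕ → (MvPolynomial (Fin 4) k ⧸ (Iab k ^ n : Ideal (MvPolynomial (Fin 4) k))) :=
    fun i => if h : i < n+1 then f ⟨i, h⟩ else 0 with hf'
  have hrel : ∀ i < n, (X 0 : MvPolynomial (Fin 4) k) • f' i = (X 1 : MvPolynomial (Fin 4) k) • f' (i+1) := by
    intro i hi
    rw [hf']
    simp only [dif_pos (by omega : i < n+1), dif_pos (by omega : i+1 < n+1)]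
    exact hf i hi
  have hsum : ∑ i ∈ Finset.range (n+1), g' i * mgen k n i = 0 := by
    rw [← hg0]
    show _ = ∑ i : Fin (n+1), g i * mgen k n i
    rw [Finset.sum_range fun i => g' i * mgen k n i]
    apply Finset.sum_congr rfl
    intro i _
    rw [hg']
    simp [i.2]
  have := syzygy k (MvPolynomial (Fin 4) k ⧸ (Iab k ^ n : Ideal (MvPolynomial (Fin 4) k)))
    n f' hrel g' hsum
  show ∑ i : Fin (n+1), g i • f i = 0
  rw [← this, Finset.sum_range fun i => g' i • f' i]
  apply Finset.sum_congr rfl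
  intro i _
  rw [hg', hf']
  simp [i.2]

end Equiv1

section Equiv1b
variable (n : ℕ)

noncomputable def PhiK (k : Type) [Field k] (n : ℕ) :
    ((↥(Iab k ^ n) →ₗ[MvPolynomial (Fin 4) k]
        (MvPolynomial (Fin 4) k ⧸ (Iab k ^ n : Ideal (MvPolynomial (Fin 4) k)))))
      →ₗ[MvPolynomial (Fin 4) k] ↥(Ksub k n) :=
  (Phi k n).codRestrict (Ksub k n) (Phi_mem_Ksub k n)

lemma comp_piMap' (φ : ↥(Iab k ^ n) →ₗ[MvPolynomial (Fin 4) k]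
      (MvPolynomial (Fin 4) k ⧸ (Iab k ^ n : Ideal (MvPolynomial (Fin 4) k))))
    (g : Fin (n+1) → MvPolynomial (Fin 4) k) :
    φ (piMap' k n g) = ∑ i : Fin (n+1), g i • Phi k n φ i := by
  have hval : piMap' k n g = ∑ i : Fin (n+1),
      g i • (⟨mgen k n i, mgen_mem k n i (Nat.lt_succ_iff.mp i.2)⟩ : ↥(Iab k ^ n)) := by
    apply Subtype.ext
    have := map_sum ((Iab k ^ n : Ideal (MvPolynomial (Fin 4) k)).subtype)
      (fun i : Fin (n+1) =>
        g i • (⟨mgen k n i, mgen_mem k n i (Nat.lt_succ_iff.mp i.2)⟩ : ↥(Iab k ^ n)))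
      Finset.univ
    rw [show ((∑ i : Fin (n+1),
      g i • (⟨mgen k n i, mgen_mem k n i (Nat.lt_succ_iff.mp i.2)⟩ : ↥(Iab k ^ n)) : ↥(Iab k ^ n)) :
        MvPolynomial (Fin 4) k) = _ from this]
    show piMap k n g = _
    simp only [piMap, LinearMap.coe_mk, AddHom.coe_mk, Submodule.coe_subtype,
      SetLike.val_smul, smul_eq_mul]
  rw [hval, map_sum]
  apply Finset.sum_congr rfl
  intro i _
  rw [map_smul]
  rfl

lemma PhiK_bijective : Function.Bijective (PhiK k n) := by
  constructor
  · rw [← LinearMap.ker_eq_bot, LinearMap.ker_eq_bot']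
    intro φ hφ
    have hz : ∀ i : Fin (n+1), Phi k n φ i = 0 := by
      intro i
      have := congrArg Subtype.val hφ
      exact congrFun this i
    ext x
    obtain ⟨g, hg⟩ := piMap'_surj k n x
    rw [← hg, comp_piMap']
    simp [hz]
  · rintro ⟨f, hf⟩
    set φf := ((LinearMap.ker (piMap' k n)).liftQ (psiMap k n f) (ker_le k n f hf)).comp
      ((piMap' k n).quotKerEquivOfSurjective (piMap'_surj k n)).symm.toLinearMap with hφf
    have hap : ∀ g, φf (piMap' k n g) = psiMap k n f g := by
      intro g
      have h1 : ((piMap' k n).quotKerEquivOfSurjective (piMap'_surj k n)).symm (piMap' k n g)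
          = Submodule.Quotient.mk g := by
        rw [LinearEquiv.symm_apply_eq]
        rfl
      rw [hφf, LinearMap.coe_comp, Function.comp_apply, LinearEquiv.coe_toLinearMap, h1]
      rfl
    refine ⟨φf, ?_⟩
    apply Subtype.ext
    funext i
    show Phi k n φf i = f i
    have hsingle : (⟨mgen k n i, mgen_mem k n i (Nat.lt_succ_iff.mp i.2)⟩ : ↥(Iab k ^ n))
        = piMap' k n (Pi.single i 1) := by
      apply Subtype.ext
      show mgen k n i = piMap k n (Pi.single i 1)
      rw [piMap_single, one_mul]
    show φf _ = f i
    rw [hsingle, hap, psiMap_single, one_smul]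

noncomputable def equiv1 (k : Type) [Field k] (n : ℕ) :
    ((↥(Iab k ^ n) →ₗ[MvPolynomial (Fin 4) k]
        (MvPolynomial (Fin 4) k ⧸ (Iab k ^ n : Ideal (MvPolynomial (Fin 4) k)))))
      ≃ₗ[MvPolynomial (Fin 4) k] ↥(Ksub k n) :=
  LinearEquiv.ofBijective (PhiK k n) (PhiK_bijective k n)

end Equiv1b

section Chain
variable (n : ℕ)

/-- coefficient-level consequence of the relations -/
lemma hrel_coeff (F : ℕ → MvPolynomial (Fin 4) k)
    (hrel : ∀ i < n, (X 0 : MvPolynomial (Fin 4) k) * F i - X 1 * F (i+1) ∈ (Iab k) ^ n)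
    (i : ℕ) (hi : i < n) (μ : Fin 4 →₀ ℕ) (hμ : μ 0 + μ 1 + 1 ≤ n) :
    (if μ 0 ≠ 0 then coeff (μ - Finsupp.single 0 1) (F i) else 0)
      = (if μ 1 ≠ 0 then coeff (μ - Finsupp.single 1 1) (F (i+1)) else 0) := by
  have h0 : coeff μ ((X 0 : MvPolynomial (Fin 4) k) * F i - X 1 * F (i+1)) = 0 := by
    by_contra hc
    have := (mem_pow_iff k n _).mp (hrel i hi) μ (mem_support_iff.mpr hc)
    omega
  rw [coeff_sub, sub_eq_zero] at h0
  rw [coeff_X_mul', coeff_X_mul'] at h0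
  convert h0 using 2
  · simp [Finsupp.mem_support_iff, eq_iff_iff]
  · simp [Finsupp.mem_support_iff, eq_iff_iff]

lemma chain_L2 (F : ℕ → MvPolynomial (Fin 4) k)
    (hrel : ∀ i < n, (X 0 : MvPolynomial (Fin 4) k) * F i - X 1 * F (i+1) ∈ (Iab k) ^ n) :
    ∀ (t i : ℕ) (m : Fin 4 →₀ ℕ), m 1 = t → i + m 1 + 1 ≤ n → m 0 + m 1 + 2 ≤ n →
      coeff m (F i) = 0 := by
  intro t
  induction t with
  | zero =>
    intro i m hm1 hin hdeg
    have hr := hrel_coeff k n F hrel i (by omega) (m + Finsupp.single 0 1)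
      (by simp [Finsupp.add_apply, Finsupp.single_apply]; omega)
    rw [if_pos (by simp [Finsupp.add_apply, Finsupp.single_apply]),
      if_neg (by simp [Finsupp.add_apply, Finsupp.single_apply]; omega), add_tsub_cancel_right] at hr
    exact hr
  | succ t ih =>
    intro i m hm1 hin hdeg
    have hr := hrel_coeff k n F hrel i (by omega) (m + Finsupp.single 0 1)
      (by simp [Finsupp.add_apply, Finsupp.single_apply]; omega)
    rw [if_pos (by simp [Finsupp.add_apply, Finsupp.single_apply]),
      if_pos (by simp [Finsupp.add_apply, Finsupp.single_apply]; omega),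
      add_tsub_cancel_right] at hr
    rw [hr]
    apply ih (i+1)
    · simp [Finsupp.tsub_apply, Finsupp.add_apply, Finsupp.single_apply]
      omega
    · have : ((m + Finsupp.single 0 1 - Finsupp.single 1 1) : Fin 4 →₀ ℕ) 1 = t := by
        simp [Finsupp.tsub_apply, Finsupp.add_apply, Finsupp.single_apply]
        omega
      omega
    · have h0 : ((m + Finsupp.single 0 1 - Finsupp.single 1 1) : Fin 4 →₀ ℕ) 0 = m 0 + 1 := by
        simp [Finsupp.tsub_apply, Finsupp.add_apply, Finsupp.single_apply]
      have h1 : ((m + Finsupp.single 0 1 - Finsupp.single 1 1) : Fin 4 →₀ ℕ) 1 = t := by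
        simp [Finsupp.tsub_apply, Finsupp.add_apply, Finsupp.single_apply]
        omega
      omega

lemma chain_L1 (F : ℕ → MvPolynomial (Fin 4) k)
    (hrel : ∀ i < n, (X 0 : MvPolynomial (Fin 4) k) * F i - X 1 * F (i+1) ∈ (Iab k) ^ n) :
    ∀ (s i : ℕ) (m : Fin 4 →₀ ℕ), m 0 = s → m 0 < i → i ≤ n → m 0 + m 1 + 2 ≤ n →
      coeff m (F i) = 0 := by
  intro s
  induction s with
  | zero =>
    intro i m hm0 hlt hin hdeg
    obtain ⟨j, rfl⟩ : ∃ j, i = j + 1 := ⟨i - 1, by omega⟩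
    have hr := hrel_coeff k n F hrel j (by omega) (m + Finsupp.single 1 1)
      (by simp [Finsupp.add_apply, Finsupp.single_apply]; omega)
    rw [if_neg (by simp [Finsupp.add_apply, Finsupp.single_apply]; omega),
      if_pos (by simp [Finsupp.add_apply, Finsupp.single_apply]),
      add_tsub_cancel_right] at hr
    exact hr.symm
  | succ s ih =>
    intro i m hm0 hlt hin hdeg
    obtain ⟨j, rfl⟩ : ∃ j, i = j + 1 := ⟨i - 1, by omega⟩
    have hr := hrel_coeff k n F hrel j (by omega) (m + Finsupp.single 1 1)
      (by simp [Finsupp.add_apply, Finsupp.single_apply]; omega)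
    rw [if_pos (by simp [Finsupp.add_apply, Finsupp.single_apply]; omega),
      if_pos (by simp [Finsupp.add_apply, Finsupp.single_apply]),
      add_tsub_cancel_right] at hr
    rw [← hr]
    apply ih j
    · simp [Finsupp.tsub_apply, Finsupp.add_apply, Finsupp.single_apply]
      omega
    · have h0 : ((m + Finsupp.single 1 1 - Finsupp.single 0 1) : Fin 4 →₀ ℕ) 0 = s := by
        simp [Finsupp.tsub_apply, Finsupp.add_apply, Finsupp.single_apply]
        omega
      omega
    · omega
    · have h0 : ((m + Finsupp.single 1 1 - Finsupp.single 0 1) : Fin 4 →₀ ℕ) 0 = s := by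
        simp [Finsupp.tsub_apply, Finsupp.add_apply, Finsupp.single_apply]
        omega
      have h1 : ((m + Finsupp.single 1 1 - Finsupp.single 0 1) : Fin 4 →₀ ℕ) 1 = m 1 + 1 := by
        simp [Finsupp.tsub_apply, Finsupp.add_apply, Finsupp.single_apply]
      omega

/-- The chain lemma: the relations force all low-degree coefficients to vanish. -/
lemma chain (F : ℕ → MvPolynomial (Fin 4) k)
    (hrel : ∀ i < n, (X 0 : MvPolynomial (Fin 4) k) * F i - X 1 * F (i+1) ∈ (Iab k) ^ n)
    (i : ℕ) (hi : i ≤ n) (m : Fin 4 →₀ ℕ) (hm : m 0 + m 1 + 2 ≤ n) :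
    coeff m (F i) = 0 := by
  rcases lt_or_ge (m 0) i with h | h
  · exact chain_L1 k n F hrel (m 0) i m rfl h hi hm
  · exact chain_L2 k n F hrel (m 1) i m rfl (by omega) hm

end Chain

section Beta
variable (n : ℕ)

lemma mgen_eq_monomial (j q : ℕ) :
    mgen k j q = monomial (Finsupp.single 0 q + Finsupp.single 1 (j - q)) (1 : k) := by
  rw [mgen, X_pow_eq_monomial, X_pow_eq_monomial, monomial_mul, one_mul]

/-- multiplication by a generator, as a linear map -/
noncomputable def mulGen (k : Type) [Field k] (n p : ℕ) :
    MvPolynomial (Fin 4) k →ₗ[MvPolynomial (Fin 4) k] MvPolynomial (Fin 4) k where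
  toFun r := r * mgen k (n-1) p
  map_add' r s := by ring
  map_smul' r s := by simp only [smul_eq_mul, RingHom.id_apply]; ring

lemma mul_gen_mem (hn : 1 ≤ n) (p : ℕ) (hp : p ≤ n - 1) (r : MvPolynomial (Fin 4) k)
    (hr : r ∈ Iab k) : r * mgen k (n-1) p ∈ (Iab k) ^ n := by
  have h1 : r * mgen k (n-1) p ∈ (Iab k) * (Iab k) ^ (n-1) :=
    Ideal.mul_mem_mul hr (mgen_mem k (n-1) p hp)
  have h2 : (Iab k) * (Iab k) ^ (n-1) = (Iab k) ^ n := by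
    rw [← pow_succ']
    congr 1
    omega
  rwa [h2] at h1

/-- the map `R/I → R/I^n` given by multiplication by `a^p b^{n-1-p}` -/
noncomputable def betaSingle (k : Type) [Field k] (n : ℕ) (hn : 1 ≤ n) (p : ℕ) (hp : p ≤ n - 1) :
    (MvPolynomial (Fin 4) k ⧸ (Iab k : Ideal (MvPolynomial (Fin 4) k)))
      →ₗ[MvPolynomial (Fin 4) k]
    (MvPolynomial (Fin 4) k ⧸ (Iab k ^ n : Ideal (MvPolynomial (Fin 4) k))) :=
  Submodule.liftQ (Iab k : Ideal (MvPolynomial (Fin 4) k))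
    (((Iab k ^ n : Ideal (MvPolynomial (Fin 4) k)).mkQ).comp (mulGen k n p))
    (by
      intro r hr
      rw [LinearMap.mem_ker, LinearMap.comp_apply, Submodule.mkQ_apply,
        Submodule.Quotient.mk_eq_zero]
      exact mul_gen_mem k n hn p hp r hr)

lemma betaSingle_mk (hn : 1 ≤ n) (p : ℕ) (hp : p ≤ n - 1) (r : MvPolynomial (Fin 4) k) :
    betaSingle k n hn p hp (Submodule.Quotient.mk r)
      = Submodule.Quotient.mk (r * mgen k (n-1) p) := rfl

lemma smul_betaSingle_zero (hn : 1 ≤ n) (p : ℕ) (hp : p ≤ n - 1)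
    (x : MvPolynomial (Fin 4) k) (hx : x ∈ Iab k)
    (u : MvPolynomial (Fin 4) k ⧸ (Iab k : Ideal (MvPolynomial (Fin 4) k))) :
    x • betaSingle k n hn p hp u = 0 := by
  obtain ⟨r, rfl⟩ := Submodule.Quotient.mk_surjective _ u
  rw [betaSingle_mk, ← Submodule.Quotient.mk_smul, Submodule.Quotient.mk_eq_zero]
  rw [smul_eq_mul, ← mul_assoc]
  exact mul_gen_mem k n hn p hp _ (Ideal.mul_mem_right _ _ hx)

/-- assembling the maps for all generators -/
noncomputable def betaP (k : Type) [Field k] (n : ℕ) (hn : 1 ≤ n) :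
    (Fin n → (MvPolynomial (Fin 4) k ⧸ (Iab k : Ideal (MvPolynomial (Fin 4) k))))
      →ₗ[MvPolynomial (Fin 4) k]
    (MvPolynomial (Fin 4) k ⧸ (Iab k ^ n : Ideal (MvPolynomial (Fin 4) k))) where
  toFun c := ∑ p : Fin n, betaSingle k n hn p (by omega : (p:ℕ) ≤ n - 1) (c p)
  map_add' c d := by
    simp only [Pi.add_apply, map_add]
    rw [Finset.sum_add_distrib]
  map_smul' r c := by
    simp only [Pi.smul_apply, map_smul, RingHom.id_apply]
    rw [Finset.smul_sum]

lemma betaP_mk (hn : 1 ≤ n) (s : Fin n → MvPolynomial (Fin 4) k) :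
    betaP k n hn (fun p => Submodule.Quotient.mk (s p))
      = Submodule.Quotient.mk (∑ p : Fin n, s p * mgen k (n-1) p) := by
  simp only [betaP, LinearMap.coe_mk, AddHom.coe_mk]
  rw [← Submodule.mkQ_apply, map_sum]
  apply Finset.sum_congr rfl
  intro p _
  rfl

lemma smul_betaP_zero (hn : 1 ≤ n) (x : MvPolynomial (Fin 4) k) (hx : x ∈ Iab k)
    (c : Fin n → (MvPolynomial (Fin 4) k ⧸ (Iab k : Ideal (MvPolynomial (Fin 4) k)))) :
    x • betaP k n hn c = 0 := by
  simp only [betaP, LinearMap.coe_mk, AddHom.coe_mk]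
  rw [Finset.smul_sum]
  apply Finset.sum_eq_zero
  intro p _
  exact smul_betaSingle_zero k n hn p (by omega) x hx (c p)

/-- the combined map into tuples -/
noncomputable def Gamma (k : Type) [Field k] (n : ℕ) (hn : 1 ≤ n) :
    (Fin (n+1) → Fin n → (MvPolynomial (Fin 4) k ⧸ (Iab k : Ideal (MvPolynomial (Fin 4) k))))
      →ₗ[MvPolynomial (Fin 4) k]
    (Fin (n+1) → (MvPolynomial (Fin 4) k ⧸ (Iab k ^ n : Ideal (MvPolynomial (Fin 4) k)))) :=
  LinearMap.pi (fun i => (betaP k n hn).comp (LinearMap.proj i))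

lemma Gamma_apply (hn : 1 ≤ n)
    (c : Fin (n+1) → Fin n → (MvPolynomial (Fin 4) k ⧸ (Iab k : Ideal (MvPolynomial (Fin 4) k))))
    (i : Fin (n+1)) : Gamma k n hn c i = betaP k n hn (c i) := rfl

lemma Gamma_mem_Ksub (hn : 1 ≤ n)
    (c : Fin (n+1) → Fin n → (MvPolynomial (Fin 4) k ⧸ (Iab k : Ideal (MvPolynomial (Fin 4) k)))) :
    Gamma k n hn c ∈ Ksub k n := by
  intro i h
  rw [Gamma_apply, Gamma_apply]
  rw [smul_betaP_zero k n hn _ (Ideal.subset_span (by simp)),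
    smul_betaP_zero k n hn _ (Ideal.subset_span (by simp))]

/-- linear independence of the generators modulo `I^n` -/
lemma gen_comb_mem (hn : 1 ≤ n) (s : Fin n → MvPolynomial (Fin 4) k)
    (h : ∑ p : Fin n, s p * mgen k (n-1) p ∈ (Iab k) ^ n) (p : Fin n) : s p ∈ Iab k := by
  rw [show (Iab k : Ideal (MvPolynomial (Fin 4) k)) = (Iab k) ^ 1 by rw [pow_one]]
  rw [mem_pow_iff]
  intro m hm
  by_contra hc
  push_neg at hc
  have hm0 : m 0 = 0 := by omega
  have hm1 : m 1 = 0 := by omega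
  set sp : Fin 4 →₀ ℕ := Finsupp.single 0 (p : ℕ) + Finsupp.single 1 (n-1-p) with hsp
  set μ : Fin 4 →₀ ℕ := m + sp with hμ
  have hμ0 : μ 0 = (p : ℕ) := by
    simp [hμ, hsp, Finsupp.add_apply, Finsupp.single_apply, hm0]
  have hμ1 : μ 1 = n - 1 - p := by
    simp [hμ, hsp, Finsupp.add_apply, Finsupp.single_apply, hm1]
  have hco : coeff μ (∑ q : Fin n, s q * mgen k (n-1) q) = coeff m (s p) := by
    rw [coeff_sum]
    rw [Finset.sum_eq_single p]
    · rw [mgen_eq_monomial, coeff_mul_monomial']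
      rw [if_pos (le_add_self : sp ≤ m + sp), mul_one, hμ, add_tsub_cancel_right]
    · intro q _ hq
      rw [mgen_eq_monomial, coeff_mul_monomial']
      rw [if_neg]
      intro hle
      have h0 := hle 0
      have h1 := hle 1
      simp only [Finsupp.add_apply, Finsupp.single_apply] at h0 h1
      simp only [hμ, hsp, Finsupp.add_apply, Finsupp.single_apply] at h0 h1
      have hq' : (q : ℕ) ≠ (p : ℕ) := fun hc => hq (Fin.ext hc)
      have hqn : (q : ℕ) < n := q.2
      have hpn : (p : ℕ) < n := p.2
      simp only [show ((0:Fin 4) = 0) = True from by simp, show ((1:Fin 4) = 1) = True from by simp,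
        if_true] at h0 h1
      simp [hm0, hm1] at h0 h1
      omega
    · intro h; exact absurd (Finset.mem_univ p) h
  have hne : coeff μ (∑ q : Fin n, s q * mgen k (n-1) q) ≠ 0 := by
    rw [hco]; exact mem_support_iff.mp hm
  have := (mem_pow_iff k n _).mp h μ (mem_support_iff.mpr hne)
  have hpn : (p : ℕ) < n := p.2
  omega

end Beta

section Equiv2
variable (n : ℕ)

lemma Gamma_injective (hn : 1 ≤ n) : Function.Injective (Gamma k n hn) := by
  rw [← LinearMap.ker_eq_bot, LinearMap.ker_eq_bot']
  intro c hc
  funext i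
  have hci : betaP k n hn (c i) = 0 := by
    rw [← Gamma_apply k n hn c i, hc]; rfl
  have hrep : ∀ p : Fin n, ∃ r, Submodule.Quotient.mk r = c i p :=
    fun p => Submodule.Quotient.mk_surjective _ _
  choose s hs using hrep
  have hc' : (fun p => Submodule.Quotient.mk (s p)) = c i := funext hs
  rw [← hc', betaP_mk, Submodule.Quotient.mk_eq_zero] at hci
  funext p
  show c i p = (0 : MvPolynomial (Fin 4) k ⧸ (Iab k : Ideal (MvPolynomial (Fin 4) k)))
  rw [← hs p, Submodule.Quotient.mk_eq_zero]
  exact gen_comb_mem k n hn s hci p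

lemma Gamma_surj_Ksub (hn : 1 ≤ n)
    (f : Fin (n+1) → (MvPolynomial (Fin 4) k ⧸ (Iab k ^ n : Ideal (MvPolynomial (Fin 4) k))))
    (hf : f ∈ Ksub k n) : ∃ c, Gamma k n hn c = f := by
  have hrep : ∀ i : Fin (n+1), ∃ r, Submodule.Quotient.mk r = f i :=
    fun i => Submodule.Quotient.mk_surjective _ _
  choose Fv hFv using hrep
  set F : ℕ → MvPolynomial (Fin 4) k := fun i => if h : i < n+1 then Fv ⟨i, h⟩ else 0 with hF
  have hrel : ∀ i < n, (X 0 : MvPolynomial (Fin 4) k) * F i - X 1 * F (i+1) ∈ (Iab k) ^ n := by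
    intro i hi
    have h1 := hf i hi
    have e0 : F i = Fv ⟨i, by omega⟩ := by rw [hF]; simp [Nat.lt_succ_of_lt hi]
    have e1 : F (i+1) = Fv ⟨i+1, by omega⟩ := by rw [hF]; simp [Nat.succ_lt_succ hi]
    rw [e0, e1]
    rw [← hFv ⟨i, by omega⟩, ← hFv ⟨i+1, by omega⟩] at h1
    rw [← Submodule.Quotient.mk_smul, ← Submodule.Quotient.mk_smul] at h1
    rw [Submodule.Quotient.eq] at h1
    simpa [smul_eq_mul] using h1
  have hmem : ∀ i : Fin (n+1), (Fv i : MvPolynomial (Fin 4) k) ∈ (Iab k) ^ (n-1) := by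
    intro i
    rw [mem_pow_iff]
    intro m hm
    by_contra hcon
    push_neg at hcon
    have : coeff m (F i) = 0 :=
      chain k n F hrel i (Nat.lt_succ_iff.mp i.2) m (by omega)
    have e0 : F (i : ℕ) = Fv i := by
      rw [hF]; simp only [i.2, dif_pos]
    rw [e0] at this
    exact mem_support_iff.mp hm this
  have hexists : ∀ i : Fin (n+1), ∃ c, betaP k n hn c = f i := by
    intro i
    have := hmem i
    rw [← range_piMap k (n-1)] at this
    obtain ⟨g, hg⟩ := this
    refine ⟨fun p => Submodule.Quotient.mk (g (Fin.cast (by omega : n = n-1+1) p)), ?_⟩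
    rw [betaP_mk, ← hFv i]
    congr 1
    rw [← hg]
    show ∑ p : Fin n, g (Fin.cast (by omega : n = n-1+1) p) * mgen k (n-1) (p : ℕ)
      = piMap k (n-1) g
    have hpi : piMap k (n-1) g = ∑ q : Fin (n-1+1), g q * mgen k (n-1) (q : ℕ) := rfl
    rw [hpi, ← Fin.sum_congr' (fun q => g q * mgen k (n-1) (q : ℕ)) (by omega : n = n - 1 + 1)]
    apply Finset.sum_congr rfl
    intro p _
    rw [Fin.coe_cast]
  choose c hc using hexists
  exact ⟨c, funext hc⟩

noncomputable def GammaK (k : Type) [Field k] (n : ℕ) (hn : 1 ≤ n) :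
    (Fin (n+1) → Fin n → (MvPolynomial (Fin 4) k ⧸ (Iab k : Ideal (MvPolynomial (Fin 4) k))))
      →ₗ[MvPolynomial (Fin 4) k] ↥(Ksub k n) :=
  (Gamma k n hn).codRestrict (Ksub k n) (Gamma_mem_Ksub k n hn)

lemma GammaK_bijective (hn : 1 ≤ n) : Function.Bijective (GammaK k n hn) := by
  constructor
  · intro c c' h
    exact Gamma_injective k n hn (congrArg Subtype.val h)
  · rintro ⟨f, hf⟩
    obtain ⟨c, hc⟩ := Gamma_surj_Ksub k n hn f hf
    exact ⟨c, Subtype.ext hc⟩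

noncomputable def equiv2 (k : Type) [Field k] (n : ℕ) (hn : 1 ≤ n) :
    (Fin (n+1) → Fin n → (MvPolynomial (Fin 4) k ⧸ (Iab k : Ideal (MvPolynomial (Fin 4) k))))
      ≃ₗ[MvPolynomial (Fin 4) k] ↥(Ksub k n) :=
  LinearEquiv.ofBijective (GammaK k n hn) (GammaK_bijective k n hn)

end Equiv2
end Stmt15

open Stmt15 in
/-- The normal module of the `n`-th infinitesimal neighbourhood of a line:
`Hom_R((a,b)^n, R/(a,b)^n) ≅ (R/(a,b))^{n(n+1)}` as `R`-modules. -/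
theorem stmt_15 (k : Type) [Field k] (n : ℕ) (hn : 1 ≤ n) :
    Nonempty
      ((↥((Ideal.span {X 0, X 1} : Ideal (MvPolynomial (Fin 4) k)) ^ n) →ₗ[MvPolynomial (Fin 4) k]
          MvPolynomial (Fin 4) k ⧸ ((Ideal.span {X 0, X 1} : Ideal (MvPolynomial (Fin 4) k)) ^ n))
        ≃ₗ[MvPolynomial (Fin 4) k]
      (Fin (n * (n + 1)) →
        MvPolynomial (Fin 4) k ⧸ (Ideal.span {X 0, X 1} : Ideal (MvPolynomial (Fin 4) k)))) := by
  exact ⟨equiv1 k n ≪≫ₗ (equiv2 k n hn).symm ≪≫ₗ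
    (LinearEquiv.curry (MvPolynomial (Fin 4) k)
      (MvPolynomial (Fin 4) k ⧸ (Iab k : Ideal (MvPolynomial (Fin 4) k)))
      (Fin (n+1)) (Fin n)).symm ≪≫ₗ
    LinearEquiv.funCongrLeft (MvPolynomial (Fin 4) k) _
      ((finCongr (by ring : n * (n+1) = (n+1) * n)).trans finProdFinEquiv.symm)⟩
end
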